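/- arXiv:2111.07323 — 9 statements merged into one kernel-verified Lean document; each statement's English description precedes it below -/
import Mathlib

section
/- For all positive integers n and k, the binomial coefficient satisfies C(n+k, n) < ((n+k)/(2πnk))^{1/2} · [f(k/n)]^n, where f(x) = (1+x)^{1+x}/x^x. -/
/-!
Write `m! = s_m √(2m) (m/e)^m`, where `s_m` is Stirling's sequence, which decreases strictly
to `√π`. The exponential factors of `(n+k)!/(n! k!)` combine to `f(k/n)^n` and the square roots
to `√((n+k)/(2πnk)) · √π`, so the binomial coefficient is the bound times
`√π s_{n+k} / (s_n s_k)`. This factor is `< 1` because `s_{n+k} < s_n` and `√π ≤ s_k`.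
-/

open Real

/-- `f x = (1+x)^(1+x) / x^x` (real powers). -/
noncomputable def f (x : ℝ) : ℝ := (1 + x) ^ (1 + x) / x ^ x

theorem f_div_rpow {a b : ℝ} (ha : 0 < a) (hb : 0 < b) :
    f (b / a) ^ a = (a + b) ^ (a + b) / (a ^ a * b ^ b) := by
  have hsum : 1 + b / a = (a + b) / a := by field_simp
  have hcancel : (1 + b / a) * a = a + b := by field_simp
  rw [f, div_rpow (by positivity) (by positivity), ← rpow_mul (by positivity),
    ← rpow_mul (by positivity), hcancel, div_mul_cancel₀ _ ha.ne', hsum,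
    div_rpow (by positivity) ha.le, div_rpow hb.le ha.le, rpow_add ha]
  field_simp

namespace Stirling

theorem stirlingSeq'_strictAnti : StrictAnti (stirlingSeq ∘ Nat.succ) := by
  refine strictAnti_nat_of_succ_lt fun m => ?_
  have hterm_pos : 0 < log (stirlingSeq (m + 1)) - log (stirlingSeq (m + 2)) :=
    lt_of_lt_of_le (by positivity)
      (le_hasSum (log_stirlingSeq_sdiff_hasSum m) 0 fun j _ => by positivity)
  exact (log_lt_log_iff (stirlingSeq'_pos (m + 1)) (stirlingSeq'_pos m)).mp (sub_pos.mp hterm_pos)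

theorem stirlingSeq_lt_stirlingSeq {m n : ℕ} (hm : m ≠ 0) (hmn : m < n) :
    stirlingSeq n < stirlingSeq m := by
  obtain ⟨m, rfl⟩ := Nat.exists_eq_succ_of_ne_zero hm
  obtain ⟨n, rfl⟩ := Nat.exists_eq_succ_of_ne_zero (by omega : n ≠ 0)
  exact stirlingSeq'_strictAnti (Nat.succ_lt_succ_iff.mp hmn)

theorem stirlingSeq_pos {n : ℕ} (hn : n ≠ 0) : 0 < stirlingSeq n :=
  (sqrt_pos.2 pi_pos).trans_le (sqrt_pi_le_stirlingSeq hn)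

theorem factorial_eq_stirlingSeq_mul {n : ℕ} (hn : n ≠ 0) :
    (n.factorial : ℝ) = stirlingSeq n * (√(2 * n) * (n / exp 1) ^ n) := by
  rw [stirlingSeq, div_mul_cancel₀ _ (by positivity)]

theorem choose_add_eq_stirlingSeq_mul {n k : ℕ} (hn : n ≠ 0) (hk : k ≠ 0) :
    ((n + k).choose n : ℝ) =
      √π * stirlingSeq (n + k) / (stirlingSeq n * stirlingSeq k) *
        (√((n + k) / (2 * π * n * k)) * ((n + k) ^ (n + k) / (n ^ n * k ^ k))) := by
  have hsqrt : √((n + k) / (2 * π * n * k)) * (√π * √(2 * n) * √(2 * k)) = √(2 * (n + k)) := by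
    rw [← sqrt_mul (by positivity), ← sqrt_mul (by positivity), ← sqrt_mul (by positivity)]
    congr 1
    field_simp
  have hSn := stirlingSeq_pos hn
  have hSk := stirlingSeq_pos hk
  rw [Nat.cast_choose ℝ (Nat.le_add_right n k), Nat.add_sub_cancel_left,
    factorial_eq_stirlingSeq_mul hn, factorial_eq_stirlingSeq_mul hk,
    factorial_eq_stirlingSeq_mul (by omega : n + k ≠ 0), Nat.cast_add, ← hsqrt,
    div_pow, div_pow, div_pow]
  field_simp
  ring
theorem sqrt_pi_mul_stirlingSeq_add_lt_mul {n k : ℕ} (hn : n ≠ 0) (hk : k ≠ 0) :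
    √π * stirlingSeq (n + k) < stirlingSeq n * stirlingSeq k := by
  rw [mul_comm (stirlingSeq n)]
  exact mul_lt_mul' (sqrt_pi_le_stirlingSeq hk) (stirlingSeq_lt_stirlingSeq hn (by omega))
    (stirlingSeq_pos (by omega)).le (stirlingSeq_pos hk)

end Stirling

/-- For all positive integers `n` and `k`,
`C(n+k, n) < ((n+k)/(2πnk))^(1/2) * (f (k/n))^n`. -/
theorem binom_lt_stirling_bound (n k : ℕ) (hn : 0 < n) (hk : 0 < k) :
    ((n + k).choose n : ℝ) <
      (((n : ℝ) + (k : ℝ)) / (2 * π * n * k)) ^ ((1 : ℝ) / 2) *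
        (f ((k : ℝ) / (n : ℝ))) ^ n := by
  have hratio : √π * Stirling.stirlingSeq (n + k) /
      (Stirling.stirlingSeq n * Stirling.stirlingSeq k) < 1 :=
    (div_lt_one (mul_pos (Stirling.stirlingSeq_pos hn.ne') (Stirling.stirlingSeq_pos hk.ne'))).2
      (Stirling.sqrt_pi_mul_stirlingSeq_add_lt_mul hn.ne' hk.ne')
  have hf : f ((k : ℝ) / n) ^ n = ((n : ℝ) + k) ^ (n + k) / ((n : ℝ) ^ n * (k : ℝ) ^ k) := by
    rw [← rpow_natCast, f_div_rpow (Nat.cast_pos.2 hn) (Nat.cast_pos.2 hk)]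
    norm_cast
  rw [← sqrt_eq_rpow, hf, Stirling.choose_add_eq_stirlingSeq_mul hn.ne' hk.ne']
  exact mul_lt_of_lt_one_left (by positivity) hratio
end

section
/- Let t ∈ (1,2] and let n be a positive integer. Then k(n,t) ≥ ⌊a(t)·n⌋. -/
open Real

lemma binom_bound (N n : ℕ) (hn : n ≤ N) (p q : ℝ) (hp : 0 ≤ p) (hq : 0 ≤ q) :
    (N.choose n : ℝ) * p ^ n * q ^ (N - n) ≤ (p + q) ^ N := by
  rw [add_pow]
  calc (N.choose n : ℝ) * p ^ n * q ^ (N - n)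
      = p ^ n * q ^ (N - n) * (N.choose n : ℝ) := by ring
    _ ≤ ∑ i ∈ Finset.range (N + 1), p ^ i * q ^ (N - i) * (N.choose i : ℝ) :=
        Finset.single_le_sum (f := fun i => p ^ i * q ^ (N - i) * (N.choose i : ℝ))
          (fun i _ => by positivity)
          (Finset.mem_range.mpr (Nat.lt_succ_of_le hn))

/-- If `t ∈ (1,2]`, `n` is a positive integer, `a = a(t)` is the positive real with
`f a = t`, and `k = k(n,t)` is the nonnegative integer with
`C(n+k,n) ≤ t^n < C(n+k+1,n)`, then `k ≥ ⌊a(t)·n⌋`. -/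
theorem k_ge_floor (t : ℝ) (ht1 : 1 < t) (ht2 : t ≤ 2) (n : ℕ) (hn : 0 < n)
    (a : ℝ) (ha : 0 < a) (hfa : f a = t)
    (k : ℕ) (hk1 : ((n + k).choose n : ℝ) ≤ t ^ n)
    (hk2 : t ^ n < ((n + k + 1).choose n : ℝ)) :
    ⌊a * (n : ℝ)⌋₊ ≤ k := by
  by_contra h
  push_neg at h
  set m := ⌊a * (n : ℝ)⌋₊ with hm
  have hman : (m : ℝ) ≤ a * n := Nat.floor_le (by positivity)
  have ha1 : (0:ℝ) < 1 + a := by linarith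
  -- binomial bound with p = 1, q = a
  have hb := binom_bound (n + m) n (Nat.le_add_right n m) 1 a zero_le_one ha.le
  simp only [one_pow, mul_one, Nat.add_sub_cancel_left] at hb
  -- rewrite t ^ n using rpow
  have ht : t ^ n = (1 + a) ^ ((1 + a) * (n : ℝ)) / a ^ (a * (n : ℝ)) := by
    rw [← hfa, f, div_pow, ← Real.rpow_natCast ((1 + a) ^ (1 + a)) n,
      ← Real.rpow_natCast (a ^ a) n, ← Real.rpow_mul ha1.le, ← Real.rpow_mul ha.le]
  have hmain : ((n + m).choose n : ℝ) ≤ t ^ n := by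
    rw [ht, le_div_iff₀ (Real.rpow_pos_of_pos ha _)]
    have hsplit : a ^ (a * (n : ℝ)) = a ^ m * a ^ (a * (n : ℝ) - m) := by
      rw [← Real.rpow_natCast a m, ← Real.rpow_add ha]; ring_nf
    calc ((n + m).choose n : ℝ) * a ^ (a * (n : ℝ))
        = (((n + m).choose n : ℝ) * a ^ m) * a ^ (a * (n : ℝ) - m) := by
          rw [hsplit]; ring
      _ ≤ (1 + a) ^ (n + m) * a ^ (a * (n : ℝ) - m) :=
          mul_le_mul_of_nonneg_right hb (Real.rpow_nonneg ha.le _)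
      _ ≤ (1 + a) ^ (n + m) * (1 + a) ^ (a * (n : ℝ) - m) := by
          apply mul_le_mul_of_nonneg_left _ (by positivity)
          exact Real.rpow_le_rpow ha.le (by linarith) (by linarith)
      _ = (1 + a) ^ ((1 + a) * (n : ℝ)) := by
          rw [← Real.rpow_natCast (1 + a) (n + m), ← Real.rpow_add ha1]
          congr 1
          push_cast
          ring
  have hc : ((n + k + 1).choose n : ℝ) ≤ ((n + m).choose n : ℝ) := by
    exact_mod_cast Nat.choose_le_choose n (by omega : n + k + 1 ≤ n + m)
  linarith
end

section
/- Let t ∈ (1,2] and let n be a positive integer. Then l(n,t) ≥ ⌊b(t)·n⌋. -/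
open Real

/-- `g x = 2^x * (1+x)^(1+x) / x^x` (real powers). -/
noncomputable def g (x : ℝ) : ℝ := 2 ^ x * (1 + x) ^ (1 + x) / x ^ x

/-- If `t ∈ (1,2]`, `n` is a positive integer, `b = b(t)` is the positive real with
`g b = t`, and `l = l(n,t)` is the nonnegative integer with
`2^l·C(n+l,n) ≤ t^n < 2^(l+1)·C(n+l+1,n)`, then `l ≥ ⌊b(t)·n⌋`. -/
theorem l_ge_floor (t : ℝ) (ht1 : 1 < t) (ht2 : t ≤ 2) (n : ℕ) (hn : 0 < n)
    (b : ℝ) (hb : 0 < b) (hgb : g b = t)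
    (l : ℕ) (hl1 : (2 ^ l * (n + l).choose n : ℝ) ≤ t ^ n)
    (hl2 : t ^ n < (2 ^ (l + 1) * (n + l + 1).choose n : ℝ)) :
    ⌊b * (n : ℝ)⌋₊ ≤ l := by
  by_contra hcon
  push_neg at hcon
  set m := l + 1 with hmdef
  have hmle : (m : ℝ) ≤ b * n := by
    have h1 : m ≤ ⌊b * n⌋₊ := hcon
    calc (m : ℝ) ≤ (⌊b * (n:ℝ)⌋₊ : ℝ) := by exact_mod_cast h1
      _ ≤ b * n := Nat.floor_le (by positivity)
  have h1b : (0:ℝ) < 1 + b := by linarith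
  -- Step A : choose bound via binomial theorem
  have hA : ((n + m).choose n : ℝ) * b ^ m ≤ (1 + b) ^ (n + m) := by
    have hexp : (1 + b) ^ (n + m) =
        ∑ k ∈ Finset.range (n + m + 1), b ^ k * 1 ^ (n + m - k) * ((n + m).choose k) := by
      rw [← add_pow]; ring_nf
    rw [hexp]
    have hmem : m ∈ Finset.range (n + m + 1) := by
      simp [Nat.lt_succ_iff]
    have := Finset.single_le_sum
      (f := fun k => b ^ k * 1 ^ (n + m - k) * (((n + m).choose k : ℝ)))
      (fun i _ => by positivity) hmem
    rw [show (n + m).choose n = (n + m).choose m from Nat.choose_symm_add]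
    simpa [mul_comm] using this
  -- positivity facts
  have hbm : (0:ℝ) < b ^ m := by positivity
  have h2 : (0:ℝ) < 2 := two_pos
  -- Step B : express t ^ n with rpow
  have htn : t ^ n = 2 ^ (b * n) * (1 + b) ^ ((1 + b) * n) / b ^ (b * n) := by
    rw [← hgb]
    unfold g
    rw [div_pow, mul_pow, ← Real.rpow_natCast (2 ^ b) n, ← Real.rpow_natCast ((1+b) ^ (1+b)) n,
      ← Real.rpow_natCast (b ^ b) n, ← Real.rpow_mul (by norm_num),
      ← Real.rpow_mul h1b.le, ← Real.rpow_mul hb.le]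
  -- key inequality
  set e := b * n - m with hedef
  have he : 0 ≤ e := by simp [hedef]; linarith
  have hfac : b ^ e ≤ 2 ^ e * (1 + b) ^ e := by
    rw [← Real.mul_rpow (by norm_num) h1b.le]
    exact Real.rpow_le_rpow hb.le (by linarith) he
  have hbn : b * n = (m : ℝ) + e := by simp [hedef]
  have hmcast : (m : ℝ) = (l : ℝ) + 1 := by rw [hmdef]; push_cast; ring
  have h1bn : (1 + b) * n = ((n + m : ℕ) : ℝ) + e := by push_cast; linarith [hbn, hmcast]
  have hkey : (2:ℝ) ^ m * ((n + m).choose n : ℝ) ≤ t ^ n := by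
    rw [htn, hbn, h1bn, Real.rpow_add h2, Real.rpow_add h1b, Real.rpow_add hb,
      Real.rpow_natCast, Real.rpow_natCast, Real.rpow_natCast]
    rw [le_div_iff₀ (by positivity)]
    calc (2:ℝ) ^ m * ((n + m).choose n : ℝ) * (b ^ m * b ^ e)
        = (((n + m).choose n : ℝ) * b ^ m) * (2 ^ m * b ^ e) := by ring
      _ ≤ (1 + b) ^ (n + m) * (2 ^ m * b ^ e) := by
          have hpos : (0:ℝ) ≤ 2 ^ m * b ^ e := by positivity
          exact mul_le_mul_of_nonneg_right hA hpos
      _ = 2 ^ m * (1 + b) ^ (n + m) * b ^ e := by ring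
      _ ≤ 2 ^ m * (1 + b) ^ (n + m) * (2 ^ e * (1 + b) ^ e) := by
          have : (0:ℝ) < 2 ^ m * (1 + b) ^ (n + m) := by positivity
          nlinarith
      _ = 2 ^ m * 2 ^ e * ((1 + b) ^ (n + m) * (1 + b) ^ e) := by ring
  -- contradiction with hl2
  have : (2 ^ (l + 1) * (n + l + 1).choose n : ℝ) ≤ t ^ n := by
    have : n + l + 1 = n + m := by omega
    rw [this]
    exact_mod_cast hkey
  linarith
end

section
/- For all positive integers n, k and every p ≥ 1, the inclusion ((n+k)/n)^{1/p} · K̄ₙ^{p*} ⊆ K̄ₙ^{p*} + M₁(n,k) holds, i.e., every point of the left-hand set is the sum of a point of K̄ₙ^{p*} and a point of M₁(n,k). -/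
open Pointwise

/-- Auxiliary: given naturals `c` with total sum `k + d`, we can pick `b ≤ c`
pointwise with sum exactly `k`. -/
lemma exists_pointwise_le_sum_eq {n : ℕ} (k : ℕ) :
    ∀ (d : ℕ) (c : Fin n → ℕ), (∑ i, c i) = k + d →
      ∃ b : Fin n → ℕ, (∀ i, b i ≤ c i) ∧ (∑ i, b i) = k := by
  intro d
  induction d with
  | zero => exact fun c hc => ⟨c, fun i => le_rfl, by simpa using hc⟩
  | succ d ih =>
    intro c hc
    have hpos : (∑ i, c i) ≠ 0 := by omega
    obtain ⟨i, -, hi⟩ := Finset.exists_ne_zero_of_sum_ne_zero hpos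
    have hsplit : (∑ j, c j) = c i + ∑ j ∈ Finset.univ.erase i, c j :=
      (Finset.add_sum_erase _ _ (Finset.mem_univ i)).symm
    have hsum : (∑ j, Function.update c i (c i - 1) j) = k + d := by
      rw [Finset.sum_update_of_mem (Finset.mem_univ i)]
      have h2 : (∑ j ∈ Finset.univ \ {i}, c j) = ∑ j ∈ Finset.univ.erase i, c j := by
        rw [Finset.sdiff_singleton_eq_erase]
      omega
    obtain ⟨b, hb, hbs⟩ := ih _ hsum
    refine ⟨b, fun j => ?_, hbs⟩
    rcases eq_or_ne j i with rfl | hji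
    · have := hb j; rw [Function.update_self] at this; omega
    · have := hb j; rwa [Function.update_of_ne hji] at this

/-- For positive integers `n`, `k` and `p ≥ 1`:
`((n+k)/n)^(1/p) • K̄ₙ^{p*} ⊆ K̄ₙ^{p*} + M₁(n,k)`, where
`K̄ₙ^{p*} = {x ∈ ℝⁿ : Σ xᵢ^p ≤ n, xᵢ ≥ 0}` and
`M₁(n,k)` is the set of nonnegative integer points with coordinate sum at most `k`. -/
theorem scaled_Kpstar_subset (n k : ℕ) (hn : 0 < n) (hk : 0 < k) (p : ℝ) (hp : 1 ≤ p) :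
    ((((n : ℝ) + (k : ℝ)) / (n : ℝ)) ^ ((1 : ℝ) / p)) •
        {x : Fin n → ℝ | (∑ i, x i ^ p) ≤ (n : ℝ) ∧ ∀ i, 0 ≤ x i} ⊆
      {x : Fin n → ℝ | (∑ i, x i ^ p) ≤ (n : ℝ) ∧ ∀ i, 0 ≤ x i} +
        {x : Fin n → ℝ | (∀ i, ∃ m : ℕ, x i = (m : ℝ)) ∧ (∑ i, x i) ≤ (k : ℝ)} := by
  intro z hz
  obtain ⟨x, ⟨hxs, hxn⟩, rfl⟩ := hz
  set lam : ℝ := (((n : ℝ) + (k : ℝ)) / (n : ℝ)) ^ ((1 : ℝ) / p) with hlamdef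
  have hnp : (0:ℝ) < n := by exact_mod_cast hn
  have hbase : (0:ℝ) < ((n:ℝ) + k)/n := by positivity
  have hlam : 0 < lam := Real.rpow_pos_of_pos hbase _
  have hp0 : p ≠ 0 := by linarith
  -- components of the point
  set y : Fin n → ℝ := fun i => lam * x i with hydef
  have hzy : lam • x = y := by
    funext i; simp [hydef, smul_eq_mul]
  have hy0 : ∀ i, 0 ≤ y i := fun i => mul_nonneg hlam.le (hxn i)
  have hlp : lam ^ p = ((n:ℝ) + k)/n := by
    rw [hlamdef, ← Real.rpow_mul hbase.le, one_div_mul_cancel hp0, Real.rpow_one]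
  have hyp : (∑ i, y i ^ p) ≤ (n:ℝ) + k := by
    have h1 : (∑ i, y i ^ p) = lam ^ p * ∑ i, x i ^ p := by
      rw [Finset.mul_sum]
      exact Finset.sum_congr rfl fun i _ => Real.mul_rpow hlam.le (hxn i)
    rw [h1, hlp]
    calc ((n:ℝ) + k)/n * ∑ i, x i ^ p ≤ ((n:ℝ) + k)/n * n := by
          exact mul_le_mul_of_nonneg_left hxs hbase.le
      _ = (n:ℝ) + k := by field_simp
  -- floor parts
  set c : Fin n → ℕ := fun i => ⌊y i⌋₊ with hcdef
  have hcy : ∀ i, (c i : ℝ) ≤ y i := fun i => Nat.floor_le (hy0 i)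
  -- key pointwise inequality: for any natural b ≤ y i, (y i - b)^p + b ≤ (y i)^p
  have key : ∀ (i : Fin n) (b : ℕ), (b : ℝ) ≤ y i →
      (y i - b) ^ p + (b : ℝ) ≤ y i ^ p := by
    intro i b hb
    have h1 : (y i - b) ^ p + (b:ℝ) ^ p ≤ ((y i - b) + b) ^ p := by
      have hnn : (0:ℝ) ≤ y i - b := sub_nonneg.2 hb
      have h0 := NNReal.add_rpow_le_rpow_add (⟨y i - b, hnn⟩) (⟨(b:ℝ), Nat.cast_nonneg b⟩) hp
      have h' := NNReal.coe_le_coe.2 h0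
      push_cast [NNReal.coe_rpow] at h'
      exact h'
    have h2 : (b : ℝ) ≤ (b:ℝ) ^ p := by
      rcases Nat.eq_zero_or_pos b with rfl | hbpos
      · simp [Real.zero_rpow hp0]
      · have hb1 : (1:ℝ) ≤ (b:ℝ) := by exact_mod_cast hbpos
        calc (b:ℝ) = (b:ℝ) ^ (1:ℝ) := (Real.rpow_one _).symm
          _ ≤ (b:ℝ) ^ p := Real.rpow_le_rpow_of_exponent_le hb1 hp
    have h3 : (y i - b) + (b:ℝ) = y i := by ring
    rw [h3] at h1
    linarith
  have hgoal : (fun x => lam • x) x = y := hzy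
  rw [hgoal]
  rcases le_or_gt (∑ i, c i) k with hS | hS
  · -- floors already sum to at most k: take b = c, a = fractional parts
    refine Set.mem_add.2 ⟨fun i => y i - c i, ⟨?_, ?_⟩, fun i => (c i : ℝ), ⟨?_, ?_⟩, ?_⟩
    · -- Σ (y i - c i)^p ≤ n : each term ≤ 1
      calc (∑ i, (y i - c i) ^ p) ≤ ∑ _i : Fin n, (1:ℝ) := by
            refine Finset.sum_le_sum fun i _ => ?_
            refine Real.rpow_le_one (sub_nonneg.2 (hcy i)) ?_ (by linarith)
            have := Nat.lt_floor_add_one (y i)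
            have : y i < (c i : ℝ) + 1 := by exact_mod_cast this
            linarith
        _ = (n:ℝ) := by simp
    · exact fun i => sub_nonneg.2 (hcy i)
    · exact fun i => ⟨c i, rfl⟩
    · calc (∑ i, (c i : ℝ)) = ((∑ i, c i : ℕ) : ℝ) := by push_cast; ring
        _ ≤ (k:ℝ) := by exact_mod_cast hS
    · funext i; simp
  · -- floors sum to more than k: trim them down to total exactly k
    obtain ⟨b, hb, hbs⟩ := exists_pointwise_le_sum_eq k ((∑ i, c i) - k) c (by omega)
    have hby : ∀ i, (b i : ℝ) ≤ y i := fun i =>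
      le_trans (by exact_mod_cast hb i : (b i : ℝ) ≤ (c i : ℝ)) (hcy i)
    refine Set.mem_add.2 ⟨fun i => y i - b i, ⟨?_, ?_⟩, fun i => (b i : ℝ), ⟨?_, ?_⟩, ?_⟩
    · -- Σ (y i - b i)^p ≤ Σ y^p - k ≤ n
      have h1 : (∑ i, (y i - b i) ^ p) + (k:ℝ) ≤ (n:ℝ) + k := by
        have h2 : (∑ i, (y i - b i) ^ p) + (k:ℝ)
            = ∑ i, ((y i - b i) ^ p + (b i : ℝ)) := by
          rw [Finset.sum_add_distrib]
          congr 1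
          calc (k:ℝ) = ((∑ i, b i : ℕ) : ℝ) := by exact_mod_cast hbs.symm
            _ = ∑ i, (b i : ℝ) := by push_cast; ring
        rw [h2]
        calc (∑ i, ((y i - b i) ^ p + (b i : ℝ))) ≤ ∑ i, y i ^ p :=
              Finset.sum_le_sum fun i _ => key i (b i) (hby i)
          _ ≤ (n:ℝ) + k := hyp
      linarith
    · exact fun i => sub_nonneg.2 (hby i)
    · exact fun i => ⟨b i, rfl⟩
    · calc (∑ i, (b i : ℝ)) = ((∑ i, b i : ℕ) : ℝ) := by push_cast; ring
        _ ≤ (k:ℝ) := by exact_mod_cast hbs.le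
    · funext i; simp
end

section
/- For all positive integers n, k and every p ≥ 1, the inclusion ((n+k)/n)^{1/p} · K̄ₙ^p ⊆ K̄ₙ^p + M₂(n,k) holds, i.e., every point of the left-hand set is the sum of a point of K̄ₙ^p and a point of M₂(n,k). -/
open Pointwise

/-- Key one-dimensional inequality: for `t ≥ 1`, `(t-1)^p + 1 ≤ t^p`. -/
lemma aux_one_dim {p : ℝ} (hp : 1 ≤ p) {t : ℝ} (ht : 1 ≤ t) :
    (t - 1) ^ p + 1 ≤ t ^ p := by
  have h := NNReal.add_rpow_le_rpow_add (Real.toNNReal (t - 1)) 1 hp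
  have h' : ((Real.toNNReal (t - 1) ^ p + (1:NNReal) ^ p : NNReal) : ℝ) ≤
      (((Real.toNNReal (t - 1) + 1 : NNReal) ^ p : NNReal) : ℝ) := by exact_mod_cast h
  have h1 : ((Real.toNNReal (t - 1) : NNReal) : ℝ) = t - 1 :=
    Real.coe_toNNReal _ (by linarith)
  rw [NNReal.coe_add, NNReal.coe_rpow, NNReal.coe_rpow, NNReal.coe_rpow, NNReal.coe_add,
    NNReal.coe_one, h1] at h'
  have h2 : t - 1 + 1 = t := by ring
  rw [h2, Real.one_rpow] at h'
  exact h'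

/-- Inductive decomposition lemma. -/
lemma aux_decomp (n : ℕ) (p : ℝ) (hp : 1 ≤ p) :
    ∀ j : ℕ, ∀ z : Fin n → ℝ, (∑ i, |z i| ^ p) ≤ (n : ℝ) + j →
      ∃ a b : Fin n → ℝ, (∑ i, |a i| ^ p) ≤ (n : ℝ) ∧
        (∀ i, ∃ m : ℤ, b i = (m : ℝ)) ∧ (∑ i, |b i|) ≤ (j : ℝ) ∧ z = a + b := by
  intro j
  induction j with
  | zero =>
    intro z hz
    refine ⟨z, 0, by simpa using hz, fun i => ⟨0, by simp⟩, by simp, by simp⟩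
  | succ j ih =>
    intro z hz
    by_cases h : (∑ i, |z i| ^ p) ≤ (n : ℝ)
    · refine ⟨z, 0, h, fun i => ⟨0, by simp⟩, ?_, by simp⟩
      simp only [Pi.zero_apply, abs_zero, Finset.sum_const_zero]
      positivity
    push_neg at h
    -- there is a coordinate with |z i| > 1
    have hcard : (∑ _i : Fin n, (1 : ℝ)) = (n : ℝ) := by simp
    have hex : ∃ i, (1 : ℝ) < |z i| ^ p := by
      by_contra hc
      push_neg at hc
      have : (∑ i, |z i| ^ p) ≤ (n : ℝ) := by
        calc (∑ i, |z i| ^ p) ≤ ∑ _i : Fin n, (1 : ℝ) :=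
              Finset.sum_le_sum fun i _ => hc i
          _ = (n : ℝ) := hcard
      linarith
    obtain ⟨i, hi⟩ := hex
    have hzi : 1 < |z i| := by
      by_contra hc
      push_neg at hc
      have : |z i| ^ p ≤ 1 := Real.rpow_le_one (abs_nonneg _) hc (by linarith)
      linarith
    set s : ℝ := if 0 ≤ z i then 1 else -1 with hs
    have habs : |z i - s| = |z i| - 1 := by
      rcases le_or_gt 0 (z i) with hzpos | hzneg
      · have hsv : s = 1 := if_pos hzpos
        rw [hsv]
        rw [abs_of_nonneg hzpos] at hzi ⊢
        rw [abs_of_nonneg (by linarith)]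
      · have hsv : s = -1 := if_neg (not_le.mpr hzneg)
        rw [hsv]
        rw [abs_of_neg hzneg] at hzi ⊢
        rw [sub_neg_eq_add, abs_of_nonpos (by linarith)]
        ring
    set z' : Fin n → ℝ := Function.update z i (z i - s) with hz'
    have hsum' : (∑ i', |z' i'| ^ p) ≤ (n : ℝ) + j := by
      have e1 : (∑ i', |z' i'| ^ p)
          = |z' i| ^ p + ∑ i' ∈ Finset.univ.erase i, |z' i'| ^ p :=
        (Finset.add_sum_erase _ _ (Finset.mem_univ i)).symm
      have e2 : (∑ i', |z i'| ^ p)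
          = |z i| ^ p + ∑ i' ∈ Finset.univ.erase i, |z i'| ^ p :=
        (Finset.add_sum_erase _ _ (Finset.mem_univ i)).symm
      have e3 : (∑ i' ∈ Finset.univ.erase i, |z' i'| ^ p)
          = ∑ i' ∈ Finset.univ.erase i, |z i'| ^ p := by
        refine Finset.sum_congr rfl fun j' hj' => ?_
        rw [hz', Function.update_of_ne (Finset.ne_of_mem_erase hj')]
      have e4 : |z' i| = |z i - s| := by rw [hz', Function.update_self]
      have hkey : (|z i| - 1) ^ p + 1 ≤ |z i| ^ p := aux_one_dim hp hzi.le
      rw [e1, e3, e4, habs]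
      push_cast at hz
      linarith
    obtain ⟨a, b', ha, hbint, hbsum, heq⟩ := ih z' hsum'
    refine ⟨a, fun i' => b' i' + (if i' = i then s else 0), ha, ?_, ?_, ?_⟩
    · intro w
      obtain ⟨m, hm⟩ := hbint w
      rcases eq_or_ne w i with rfl | hwi
      · rcases le_or_gt 0 (z w) with hzpos | hzneg
        · have hsv : s = 1 := if_pos hzpos
          refine ⟨m + 1, ?_⟩
          show b' w + (if w = w then s else 0) = ((m + 1 : ℤ) : ℝ)
          rw [if_pos rfl, hm, hsv]
          push_cast; ring
        · have hsv : s = -1 := if_neg (not_le.mpr hzneg)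
          refine ⟨m - 1, ?_⟩
          show b' w + (if w = w then s else 0) = ((m - 1 : ℤ) : ℝ)
          rw [if_pos rfl, hm, hsv]
          push_cast; ring
      · refine ⟨m, ?_⟩
        show b' w + (if w = i then s else 0) = (m : ℝ)
        rw [if_neg hwi, hm, add_zero]
    · have hle : ∀ w ∈ Finset.univ, |b' w + (if w = i then s else 0)| ≤
          |b' w| + (if w = i then (1 : ℝ) else 0) := by
        intro w _
        refine (abs_add_le _ _).trans ?_
        gcongr
        rcases eq_or_ne w i with rfl | hwi
        · rw [if_pos rfl, if_pos rfl]
          rcases le_or_gt 0 (z w) with hzpos | hzneg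
          · have hsv : s = 1 := if_pos hzpos
            rw [hsv]; norm_num
          · have hsv : s = -1 := if_neg (not_le.mpr hzneg)
            rw [hsv]; norm_num
        · rw [if_neg hwi, if_neg hwi, abs_zero]
      calc (∑ w, |b' w + (if w = i then s else 0)|)
          ≤ ∑ w, (|b' w| + (if w = i then (1 : ℝ) else 0)) := Finset.sum_le_sum hle
        _ = (∑ w, |b' w|) + 1 := by
            rw [Finset.sum_add_distrib, Finset.sum_ite_eq' _ i]; simp
        _ ≤ (j : ℝ) + 1 := by linarith
        _ = ((j + 1 : ℕ) : ℝ) := by push_cast; ring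
    · funext w
      have hcj := congrFun heq w
      rcases eq_or_ne w i with rfl | hwi
      · rw [hz', Function.update_self] at hcj
        show z w = a w + (b' w + if w = w then s else 0)
        rw [if_pos rfl]
        rw [Pi.add_apply] at hcj
        linarith
      · rw [hz', Function.update_of_ne hwi] at hcj
        show z w = a w + (b' w + if w = i then s else 0)
        rw [if_neg hwi]
        rw [Pi.add_apply] at hcj
        linarith

/-- For positive integers `n`, `k` and `p ≥ 1`:
`((n+k)/n)^(1/p) • K̄ₙ^p ⊆ K̄ₙ^p + M₂(n,k)`, where
`K̄ₙ^p = {x ∈ ℝⁿ : Σ |xᵢ|^p ≤ n}` and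
`M₂(n,k)` is the set of integer points with `Σ |xᵢ| ≤ k`. -/
theorem scaled_Kp_subset (n k : ℕ) (hn : 0 < n) (hk : 0 < k) (p : ℝ) (hp : 1 ≤ p) :
    ((((n : ℝ) + (k : ℝ)) / (n : ℝ)) ^ ((1 : ℝ) / p)) •
        {x : Fin n → ℝ | (∑ i, |x i| ^ p) ≤ (n : ℝ)} ⊆
      {x : Fin n → ℝ | (∑ i, |x i| ^ p) ≤ (n : ℝ)} +
        {x : Fin n → ℝ | (∀ i, ∃ m : ℤ, x i = (m : ℝ)) ∧ (∑ i, |x i|) ≤ (k : ℝ)} := by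
  intro z hz
  obtain ⟨y, hy, rfl⟩ := hz
  set lam : ℝ := (((n : ℝ) + (k : ℝ)) / (n : ℝ)) ^ ((1 : ℝ) / p) with hlam
  have hppos : 0 < p := by linarith
  have hbase : (0 : ℝ) ≤ ((n : ℝ) + (k : ℝ)) / (n : ℝ) := by positivity
  have hlamnn : 0 ≤ lam := Real.rpow_nonneg hbase _
  have hlampow : lam ^ p = ((n : ℝ) + (k : ℝ)) / (n : ℝ) := by
    rw [hlam, ← Real.rpow_mul hbase, one_div_mul_cancel hppos.ne', Real.rpow_one]
  have hsum : (∑ i, |(lam • y) i| ^ p) ≤ (n : ℝ) + (k : ℝ) := by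
    have heach : ∀ i, |(lam • y) i| ^ p = lam ^ p * |y i| ^ p := by
      intro i
      rw [Pi.smul_apply, smul_eq_mul, abs_mul, abs_of_nonneg hlamnn,
        Real.mul_rpow hlamnn (abs_nonneg _)]
    calc (∑ i, |(lam • y) i| ^ p) = lam ^ p * ∑ i, |y i| ^ p := by
          rw [Finset.mul_sum]; exact Finset.sum_congr rfl fun i _ => heach i
      _ ≤ lam ^ p * (n : ℝ) := by
          apply mul_le_mul_of_nonneg_left hy (Real.rpow_nonneg hlamnn p)
      _ = (n : ℝ) + (k : ℝ) := by
          rw [hlampow, div_mul_cancel₀]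
          exact_mod_cast hn.ne'
  obtain ⟨a, b, ha, hbint, hbsum, heq⟩ := aux_decomp n p hp k (lam • y) hsum
  exact ⟨a, ha, b, ⟨hbint, hbsum⟩, heq.symm⟩
end

section
/- Let p ≥ 1, t ∈ (1,2], and let n be a positive integer. Then Γ_{⌊t^n⌋}(Kₙ^{p*}) ≤ (n/(n + k(n,t)))^{1/p} ≤ (n/(n + ⌊a(t)·n⌋))^{1/p}. -/
/-!
Put `N = n + k`. For `x ∈ Kₙ^{p*}` the reals `N xᵢ^p` sum to at most `N`; rounding them down to
integers `vᵢ`, and lowering these until `∑ vᵢ ≤ k`, loses at most `n` in total. With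
`cᵢ = (vᵢ/N)^{1/p}`, superadditivity of `s ↦ s^p` gives `∑ (xᵢ - cᵢ)^p ≤ ∑ (xᵢ^p - cᵢ^p) ≤ n/N`, so
`x ∈ c + (n/N)^{1/p} Kₙ^{p*}`, and there are at most `C(n+k, n) ≤ t^n` such translates `c`.
For the second inequality, `M = ⌊a n⌋` satisfies `C(n+M, n) aᴹ ≤ (1+a)^{n+M}` (one binomial term),
and `M ≤ a n` turns this into `C(n+M, n) ≤ f(a)^n = t^n < C(n+k+1, n)`, whence `M ≤ k`.
-/

open Real Set Pointwise

/-- The covering functional `Γ_m(K)`: the infimum of all `γ > 0` such that `K` can be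
covered by `m` translates of `γ • K`. -/
noncomputable def coveringFunctional {n : ℕ} (m : ℕ) (K : Set (Fin n → ℝ)) : ℝ :=
  sInf {γ : ℝ | 0 < γ ∧ ∃ C : Set (Fin n → ℝ), C.Finite ∧ C.ncard = m ∧ K ⊆ C + γ • K}

/-- `Kₙ^{p*}`: the portion of the `ℓ_p` unit ball in the nonnegative orthant. -/
noncomputable def Kpstar (n : ℕ) (p : ℝ) : Set (Fin n → ℝ) :=
  {x | (∑ i, x i ^ p) ≤ 1 ∧ ∀ i, 0 ≤ x i}

lemma Finset.exists_le_sum_eq {ι : Type*} [DecidableEq ι] (t : Finset ι) (g : ι → ℕ) {s : ℕ}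
    (hs : s ≤ ∑ i ∈ t, g i) : ∃ v ≤ g, ∑ i ∈ t, v i = s := by
  induction t using Finset.induction generalizing s with
  | empty => exact ⟨0, fun _ => Nat.zero_le _, by simpa using (hs.antisymm (Nat.zero_le _)).symm⟩
  | insert a t ha ih =>
    rw [Finset.sum_insert ha] at hs
    obtain ⟨v, hvg, hv⟩ := ih (s := s - min s (g a)) (by omega)
    refine ⟨Function.update v a (min s (g a)), fun i => ?_, ?_⟩
    · rcases eq_or_ne i a with rfl | hia
      · simp
      · simpa [Function.update_of_ne hia] using hvg i
    · rw [Finset.sum_insert ha, Function.update_self, Finset.sum_congr rfl fun i hi =>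
        Function.update_of_ne (ne_of_mem_of_not_mem hi ha) _ _, hv]
      omega

lemma exists_nat_le_of_sum_le {ι : Type*} [Fintype ι] {z : ι → ℝ} (hz : 0 ≤ z) {k : ℕ}
    (hsum : ∑ i, z i ≤ Fintype.card ι + k) :
    ∃ v : ι → ℕ, ∑ i, v i ≤ k ∧ (∀ i, (v i : ℝ) ≤ z i) ∧ ∑ i, z i ≤ Fintype.card ι + ∑ i, v i := by
  classical
  obtain ⟨v, hvz, hv⟩ :=
    Finset.univ.exists_le_sum_eq (fun i => ⌊z i⌋₊) (min_le_left (∑ i, ⌊z i⌋₊) k)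
  refine ⟨v, hv ▸ min_le_right _ _,
    fun i => (Nat.cast_le.2 (hvz i)).trans (Nat.floor_le (hz i)), ?_⟩
  rcases min_cases (∑ i, ⌊z i⌋₊) k with ⟨hmin, -⟩ | ⟨hmin, -⟩
  · calc ∑ i, z i ≤ ∑ i, ((⌊z i⌋₊ : ℝ) + 1) :=
          Finset.sum_le_sum fun i _ => (Nat.lt_floor_add_one (z i)).le
      _ = Fintype.card ι + ∑ i, v i := by
          rw [hv, hmin, Finset.sum_add_distrib, Nat.cast_sum]
          simp [add_comm]
  · rwa [hv, hmin]

lemma finite_setOf_sum_le (n k : ℕ) : {v : Fin n → ℕ | ∑ i, v i ≤ k}.Finite :=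
  (Set.Finite.pi fun _ : Fin n => Set.finite_Iic k).subset fun v hv i _ =>
    (Finset.single_le_sum (fun j _ => Nat.zero_le (v j)) (Finset.mem_univ i)).trans hv

lemma ncard_setOf_sum_le (n k : ℕ) : {v : Fin n → ℕ | ∑ i, v i ≤ k}.ncard ≤ (n + k).choose n := by
  classical
  calc {v : Fin n → ℕ | ∑ i, v i ≤ k}.ncard
      ≤ ((Finset.univ : Finset (Fin (n + 1))).piAntidiag k : Set (Fin (n + 1) → ℕ)).ncard := by
        refine ncard_le_ncard_of_injOn (fun v => Fin.cons (k - ∑ i, v i) v) ?_ ?_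
        · intro v hv
          simp only [Finset.mem_coe, Finset.mem_piAntidiag, Finset.mem_univ, Fin.sum_cons]
          exact ⟨Nat.sub_add_cancel hv, fun _ _ => trivial⟩
        · intro v _ w _ h
          exact (Fin.cons_injective2 h).2
    _ = (n + k).choose n := by
        rw [ncard_coe_finset, ← Finset.map_sym_eq_piAntidiag, Finset.card_map, Finset.sym_univ,
          Finset.card_univ, Sym.card_sym_eq_choose, Fintype.card_fin, Nat.add_right_comm,
          Nat.add_sub_cancel, Nat.choose_symm_add]

lemma mem_smul_Kpstar {n : ℕ} {p β : ℝ} (hβ : 0 < β) {z : Fin n → ℝ} (hz : 0 ≤ z)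
    (h : ∑ i, z i ^ p ≤ β ^ p) : z ∈ β • Kpstar n p := by
  rw [mem_smul_set_iff_inv_smul_mem₀ hβ.ne']
  refine ⟨?_, fun i => mul_nonneg (inv_nonneg.2 hβ.le) (hz i)⟩
  simp only [Pi.smul_apply, smul_eq_mul, mul_rpow (inv_nonneg.2 hβ.le) (hz _), ← Finset.mul_sum,
    inv_rpow hβ.le]
  exact inv_mul_le_one_of_le₀ h (by positivity)

lemma sub_mem_smul_Kpstar {n : ℕ} {p β : ℝ} (hp : 1 ≤ p) (hβ : 0 < β) {x c : Fin n → ℝ}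
    (hc : 0 ≤ c) (hcx : c ≤ x) (h : ∑ i, (x i ^ p - c i ^ p) ≤ β ^ p) :
    x - c ∈ β • Kpstar n p := by
  refine mem_smul_Kpstar hβ (sub_nonneg.2 hcx) ((Finset.sum_le_sum fun i _ => ?_).trans h)
  have := add_rpow_le_rpow_add (sub_nonneg.2 (hcx i)) (hc i) hp
  rw [sub_add_cancel] at this
  simp only [Pi.sub_apply]
  linarith

noncomputable def latticeTranslates (n k : ℕ) (p : ℝ) : Set (Fin n → ℝ) :=
  (fun v : Fin n → ℕ => fun i => ((v i : ℝ) / (n + k)) ^ (1 / p)) '' {v | ∑ i, v i ≤ k}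

lemma Kpstar_subset_latticeTranslates_add_smul {n k : ℕ} {p : ℝ} (hp : 1 ≤ p) (hn : 0 < n) :
    Kpstar n p ⊆ latticeTranslates n k p + ((n : ℝ) / (n + k)) ^ (1 / p) • Kpstar n p := by
  rintro x ⟨hx1, hx0⟩
  have hp0 : p ≠ 0 := (zero_lt_one.trans_le hp).ne'
  set N : ℝ := n + k
  have hN : 0 < N := by positivity
  obtain ⟨v, hvk, hvx, hxv⟩ := exists_nat_le_of_sum_le (z := fun i => N * x i ^ p)
    (fun i => mul_nonneg hN.le (rpow_nonneg (hx0 i) p)) (k := k)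
    (by simpa [← Finset.mul_sum] using mul_le_of_le_one_right hN.le hx1)
  set c : Fin n → ℝ := fun i => ((v i : ℝ) / N) ^ (1 / p)
  have hcp (i : Fin n) : c i ^ p = v i / N := by
    simp only [c, one_div, rpow_inv_rpow (by positivity : (0 : ℝ) ≤ v i / N) hp0]
  have hcx : c ≤ x := fun i => by
    calc c i ≤ (x i ^ p) ^ (1 / p) :=
          rpow_le_rpow (by positivity) ((div_le_iff₀' hN).2 (hvx i)) (by positivity)
      _ = x i := by rw [one_div, rpow_rpow_inv (hx0 i) hp0]
  refine ⟨c, ⟨v, hvk, rfl⟩, x - c, sub_mem_smul_Kpstar hp (by positivity)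
    (fun i => by positivity) hcx ?_, add_sub_cancel _ _⟩
  rw [← rpow_mul (by positivity), one_div_mul_cancel hp0, rpow_one]
  simp only [hcp, Finset.sum_sub_distrib, ← Finset.sum_div, le_div_iff₀ hN, sub_mul,
    div_mul_cancel₀ _ hN.ne']
  simp only [← Finset.mul_sum, Fintype.card_fin, Nat.cast_sum] at hxv
  linarith

lemma coveringFunctional_le {n m : ℕ} {K C : Set (Fin n → ℝ)} {γ : ℝ} (hn : 0 < n)
    (hγ : 0 < γ) (hC : C.Finite) (hCm : C.ncard ≤ m) (hK : K ⊆ C + γ • K) :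
    coveringFunctional m K ≤ γ := by
  have : Nonempty (Fin n) := ⟨⟨0, hn⟩⟩
  obtain ⟨D, hD, hDfin, hDcard⟩ := (infinite_univ.sdiff hC).exists_subset_ncard_eq (m - C.ncard)
  refine csInf_le ⟨0, fun _ h => h.1.le⟩ ⟨hγ, C ∪ D, hC.union hDfin, ?_,
    hK.trans (add_subset_add_right subset_union_left)⟩
  rw [ncard_union_eq (disjoint_of_subset_right hD disjoint_sdiff_right) hC hDfin, hDcard]
  omega

lemma choose_mul_pow_le_add_pow (N m : ℕ) (a : ℝ) (ha : 0 ≤ a) :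
    (N.choose m : ℝ) * a ^ m ≤ (1 + a) ^ N := by
  rcases lt_or_ge N m with h | h
  · rw [Nat.choose_eq_zero_of_lt h, Nat.cast_zero, zero_mul]
    positivity
  rw [add_comm, add_pow]
  refine (le_of_eq (by ring)).trans (Finset.single_le_sum
    (f := fun j => a ^ j * 1 ^ (N - j) * (N.choose j : ℝ)) (fun j _ => by positivity)
    (Finset.mem_range.2 (Nat.lt_succ_of_le h)))

lemma f_pow_eq {a : ℝ} (ha : 0 < a) (n : ℕ) :
    f a ^ n = (1 + a) ^ n * ((1 + a) / a) ^ (a * n) := by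
  have h1a : 0 < 1 + a := by linarith
  rw [rpow_mul_natCast (by positivity), ← mul_pow, f, rpow_add h1a, rpow_one,
    div_rpow h1a.le ha.le, mul_div_assoc]

lemma choose_add_le_f_pow {a : ℝ} (ha : 0 < a) {n M : ℕ} (hM : (M : ℝ) ≤ a * n) :
    ((n + M).choose n : ℝ) ≤ f a ^ n := by
  have h1a : 1 ≤ (1 + a) / a := by rw [le_div_iff₀ ha]; linarith
  calc ((n + M).choose n : ℝ)
      ≤ (1 + a) ^ (n + M) / a ^ M := by
        rw [le_div_iff₀ (by positivity), Nat.choose_symm_add]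
        exact choose_mul_pow_le_add_pow _ _ _ ha.le
    _ = (1 + a) ^ n * ((1 + a) / a) ^ (M : ℝ) := by
        rw [rpow_natCast, div_pow, pow_add, mul_div_assoc]
    _ ≤ (1 + a) ^ n * ((1 + a) / a) ^ (a * n) := by
        gcongr
    _ = f a ^ n := (f_pow_eq ha n).symm

lemma floor_mul_le_of_f_pow_lt_choose {a : ℝ} {n k : ℕ}
    (h : f a ^ n < ((n + k + 1).choose n : ℝ)) : ⌊a * n⌋₊ ≤ k := by
  by_contra! hk
  have han : 1 ≤ a * n := Nat.floor_pos.1 (by omega)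
  have ha : 0 < a := pos_of_mul_pos_left (by linarith) (Nat.cast_nonneg n)
  have hchoose : ((n + k + 1).choose n : ℝ) ≤ (n + ⌊a * n⌋₊).choose n := by
    exact_mod_cast Nat.choose_le_choose n (by omega)
  linarith [choose_add_le_f_pow ha (Nat.floor_le (a := a * n) (by linarith))]

theorem coveringFunctional_Kpstar_le_general (p : ℝ) (hp : 1 ≤ p)
    (t : ℝ) (n : ℕ) (hn : 0 < n)
    (a : ℝ) (hfa : f a = t)
    (k : ℕ) (hk1 : ((n + k).choose n : ℝ) ≤ t ^ n)
    (hk2 : t ^ n < ((n + k + 1).choose n : ℝ)) :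
    coveringFunctional ⌊t ^ n⌋₊ (Kpstar n p) ≤ ((n : ℝ) / ((n : ℝ) + k)) ^ (1 / p) ∧
      ((n : ℝ) / ((n : ℝ) + k)) ^ (1 / p) ≤
        ((n : ℝ) / ((n : ℝ) + (⌊a * (n : ℝ)⌋₊ : ℝ))) ^ (1 / p) := by
  have hcard : (latticeTranslates n k p).ncard ≤ ⌊t ^ n⌋₊ :=
    (ncard_image_le (finite_setOf_sum_le n k)).trans
      ((ncard_setOf_sum_le n k).trans (Nat.le_floor hk1))
  refine ⟨coveringFunctional_le hn (by positivity) ((finite_setOf_sum_le n k).image _) hcard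
    (Kpstar_subset_latticeTranslates_add_smul hp hn), ?_⟩
  have hak : ⌊a * n⌋₊ ≤ k := floor_mul_le_of_f_pow_lt_choose (hfa ▸ hk2)
  gcongr

/-- Let `p ≥ 1`, `t ∈ (1,2]`, `n` a positive integer, `a = a(t)` the positive solution
of `f a = t`, and `k = k(n,t)` the nonnegative integer with
`C(n+k,n) ≤ t^n < C(n+k+1,n)`. Then
`Γ_{⌊t^n⌋}(Kₙ^{p*}) ≤ (n/(n+k))^(1/p) ≤ (n/(n+⌊a·n⌋))^(1/p)`. -/
theorem coveringFunctional_Kpstar_le (p : ℝ) (hp : 1 ≤ p)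
    (t : ℝ) (ht1 : 1 < t) (ht2 : t ≤ 2) (n : ℕ) (hn : 0 < n)
    (a : ℝ) (ha : 0 < a) (hfa : f a = t)
    (k : ℕ) (hk1 : ((n + k).choose n : ℝ) ≤ t ^ n)
    (hk2 : t ^ n < ((n + k + 1).choose n : ℝ)) :
    coveringFunctional ⌊t ^ n⌋₊ (Kpstar n p) ≤ ((n : ℝ) / ((n : ℝ) + k)) ^ (1 / p) ∧
      ((n : ℝ) / ((n : ℝ) + k)) ^ (1 / p) ≤
        ((n : ℝ) / ((n : ℝ) + (⌊a * (n : ℝ)⌋₊ : ℝ))) ^ (1 / p) :=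
  coveringFunctional_Kpstar_le_general p hp t n hn a hfa k hk1 hk2
end

section
/- For every integer n ≥ 3 and every p ≥ 1, Γ_{2^n}(Kₙ^p) ≤ (n/(n+1))^{1/p} < 1. -/
open Real Set Pointwise

/-- `Kₙ^p`: the unit ball of `ℓ_p^n`. -/
noncomputable def Kp (n : ℕ) (p : ℝ) : Set (Fin n → ℝ) :=
  {x | (∑ i, |x i| ^ p) ≤ 1}

/-!
The `2n` points `±c eᵢ` with `c ^ p = 1/(n+1)` already cover `Kₙ^p` by translates of `γ Kₙ^p`
with `γ ^ p = n/(n+1)`. Given `x ∈ Kₙ^p`, take a coordinate `i` of maximal modulus `t = |xᵢ|`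
and the centre `v = sign(xᵢ) c eᵢ`. Superadditivity of `u ↦ u ^ p` gives
`|t - c| ^ p ≤ |t ^ p - c ^ p|`, so `‖x - v‖_p^p ≤ ‖x‖_p^p - t ^ p + |t ^ p - c ^ p|`, which is
at most `n/(n+1)` because `‖x‖_p^p ≤ 1` and `‖x‖_p^p ≤ n t ^ p`. Since `2n ≤ 2^n`, adding
further points gives `2^n` centres.
-/

lemma two_mul_le_two_pow : ∀ n : ℕ, 2 * n ≤ 2 ^ n
  | 0 => by norm_num
  | k + 1 => by rw [pow_succ']; exact Nat.mul_le_mul_left 2 k.lt_two_pow_self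

lemma abs_sub_rpow_le_abs_rpow_sub {a b p : ℝ} (ha : 0 ≤ a) (hb : 0 ≤ b) (hp : 1 ≤ p) :
    |a - b| ^ p ≤ |a ^ p - b ^ p| := by
  wlog hba : b ≤ a generalizing a b
  · rw [abs_sub_comm, abs_sub_comm (a ^ p)]
    exact this hb ha (le_of_not_ge hba)
  have h := add_rpow_le_rpow_add (sub_nonneg.2 hba) hb hp
  rw [sub_add_cancel] at h
  rw [abs_of_nonneg (sub_nonneg.2 hba)]
  exact (le_sub_iff_add_le.2 h).trans (le_abs_self _)

lemma sub_add_abs_sub_inv_le {N S u : ℝ} (hN : 2 ≤ N) (hS : S ≤ 1) (hSu : S ≤ N * u) :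
    S - u + |u - (N + 1)⁻¹| ≤ N / (N + 1) := by
  have hN1 : 0 < N + 1 := by linarith
  have hinv : (N + 1)⁻¹ * (N + 1) = 1 := inv_mul_cancel₀ hN1.ne'
  have hval : N / (N + 1) = 1 - (N + 1)⁻¹ := by field_simp; ring
  rcases le_total (N + 1)⁻¹ u with hu | hu
  · rw [abs_of_nonneg (sub_nonneg.2 hu)]
    linarith
  · rw [abs_of_nonpos (sub_nonpos.2 hu)]
    nlinarith [mul_le_mul_of_nonneg_left hu (by linarith : (0 : ℝ) ≤ N - 2), inv_pos.2 hN1]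

lemma mem_smul_Kp_iff {n : ℕ} {p γ : ℝ} (hγ : 0 < γ) {x : Fin n → ℝ} :
    x ∈ γ • Kp n p ↔ ∑ i, |x i| ^ p ≤ γ ^ p := by
  have hterm : ∀ i, |(γ⁻¹ • x) i| ^ p = (γ ^ p)⁻¹ * |x i| ^ p := fun i => by
    rw [Pi.smul_apply, smul_eq_mul, abs_mul, abs_of_pos (inv_pos.2 hγ),
      mul_rpow (inv_nonneg.2 hγ.le) (abs_nonneg _), inv_rpow hγ.le]
  rw [mem_smul_set_iff_inv_smul_mem₀ hγ.ne', Kp, mem_ofPred_eq]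
  simp_rw [hterm, ← Finset.mul_sum, inv_mul_le_iff₀ (rpow_pos_of_pos hγ p), mul_one]

lemma coveringFunctional_le_of_subset_add_smul {n m : ℕ} [NeZero n] {K C : Set (Fin n → ℝ)}
    {γ : ℝ} (hγ : 0 < γ) (hC : C.encard ≤ m) (hK : K ⊆ C + γ • K) :
    coveringFunctional m K ≤ γ := by
  obtain ⟨D, hCD, -, hD⟩ := exists_superset_subset_encard_eq (subset_univ C) hC (by simp)
  refine csInf_le ⟨0, fun _ h => h.1.le⟩
    ⟨hγ, D, finite_of_encard_eq_coe hD, ?_, hK.trans (add_subset_add_right hCD)⟩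
  rw [ncard_def, hD, ENat.toNat_natCast]

def crossPolytopeVertices (n : ℕ) (c : ℝ) : Set (Fin n → ℝ) :=
  range fun q : Fin n × Bool => Pi.single q.1 (if q.2 then c else -c)

lemma encard_crossPolytopeVertices_le (n : ℕ) (c : ℝ) :
    (crossPolytopeVertices n c).encard ≤ 2 * n := by
  rw [crossPolytopeVertices, ← image_univ]
  refine (encard_image_le _ _).trans ?_
  simp [mul_comm]

lemma exists_mem_crossPolytopeVertices_sum_abs_sub_rpow_le {n : ℕ} {p c : ℝ} (hn : 2 ≤ n)
    (hp : 1 ≤ p) (hc : 0 ≤ c) (hcp : c ^ p = ((n : ℝ) + 1)⁻¹) {x : Fin n → ℝ}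
    (hx : x ∈ Kp n p) :
    ∃ v ∈ crossPolytopeVertices n c, ∑ j, |x j - v j| ^ p ≤ n / (n + 1) := by
  have : Nonempty (Fin n) := ⟨⟨0, by omega⟩⟩
  obtain ⟨i, -, hi⟩ := Finset.exists_max_image Finset.univ (fun j => |x j|) Finset.univ_nonempty
  set s := if 0 ≤ x i then c else -c
  refine ⟨Pi.single i s, ⟨(i, decide (0 ≤ x i)), by simp [s]⟩, ?_⟩
  have hxi : |x i - s| = |(|x i|) - c| := by
    by_cases h : 0 ≤ x i
    · simp only [s, if_pos h, abs_of_nonneg h]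
    · rw [show s = -c from if_neg h, abs_of_neg (not_le.1 h), ← abs_neg]
      ring_nf
  have hmax : ∑ j, |x j| ^ p ≤ n * |x i| ^ p := by
    calc ∑ j, |x j| ^ p ≤ ∑ _j : Fin n, |x i| ^ p :=
          Finset.sum_le_sum fun j _ => rpow_le_rpow (abs_nonneg _) (hi j (Finset.mem_univ j))
            (by linarith)
      _ = n * |x i| ^ p := by simp
  have hoff : ∀ j ∈ Finset.univ.erase i, |x j - (Pi.single i s : Fin n → ℝ) j| ^ p = |x j| ^ p :=
    fun j hj => by rw [Pi.single_eq_of_ne (Finset.ne_of_mem_erase hj), sub_zero]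
  calc ∑ j, |x j - (Pi.single i s : Fin n → ℝ) j| ^ p
        = ∑ j, |x j| ^ p - |x i| ^ p + |(|x i|) - c| ^ p := by
        rw [← Finset.add_sum_erase _ _ (Finset.mem_univ i),
          ← Finset.add_sum_erase _ (fun j => |x j| ^ p) (Finset.mem_univ i),
          Finset.sum_congr rfl hoff, Pi.single_eq_same, hxi]
        ring
    _ ≤ ∑ j, |x j| ^ p - |x i| ^ p + |(|x i|) ^ p - c ^ p| :=
        add_le_add_right (abs_sub_rpow_le_abs_rpow_sub (abs_nonneg _) hc hp) _
    _ ≤ (n : ℝ) / (n + 1) := by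
        rw [hcp]
        exact sub_add_abs_sub_inv_le (by exact_mod_cast hn) hx hmax

lemma Kp_subset_crossPolytopeVertices_add_smul {n : ℕ} {p c γ : ℝ} (hn : 2 ≤ n) (hp : 1 ≤ p)
    (hc : 0 ≤ c) (hcp : c ^ p = ((n : ℝ) + 1)⁻¹) (hγ : 0 < γ) (hγp : γ ^ p = n / (n + 1)) :
    Kp n p ⊆ crossPolytopeVertices n c + γ • Kp n p := by
  intro x hx
  obtain ⟨v, hv, hxv⟩ := exists_mem_crossPolytopeVertices_sum_abs_sub_rpow_le hn hp hc hcp hx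
  exact ⟨v, hv, x - v, (mem_smul_Kp_iff hγ).2 (hγp ▸ hxv), add_sub_cancel v x⟩

/-- For every integer `n ≥ 3` and every `p ≥ 1`,
`Γ_{2^n}(Kₙ^p) ≤ (n/(n+1))^(1/p) < 1`. -/
theorem coveringFunctional_two_pow_Kp (n : ℕ) (hn : 3 ≤ n) (p : ℝ) (hp : 1 ≤ p) :
    coveringFunctional (2 ^ n) (Kp n p) ≤ ((n : ℝ) / ((n : ℝ) + 1)) ^ (1 / p) ∧
      ((n : ℝ) / ((n : ℝ) + 1)) ^ (1 / p) < 1 := by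
  have : NeZero n := ⟨by omega⟩
  have hp0 : p ≠ 0 := by linarith
  have hn0 : (0 : ℝ) < n := Nat.cast_pos.2 (by omega)
  set γ := ((n : ℝ) / (n + 1)) ^ (1 / p) with hγ_def
  set c := ((n : ℝ) + 1)⁻¹ ^ (1 / p) with hc_def
  have hγ : 0 < γ := by positivity
  have hγp : γ ^ p = n / (n + 1) := by rw [hγ_def, one_div, rpow_inv_rpow (by positivity) hp0]
  have hcp : c ^ p = ((n : ℝ) + 1)⁻¹ := by rw [hc_def, one_div, rpow_inv_rpow (by positivity) hp0]
  have hcover := Kp_subset_crossPolytopeVertices_add_smul (by omega) hp (by positivity) hcp hγ hγp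
  have hcard : (crossPolytopeVertices n c).encard ≤ (2 ^ n : ℕ) :=
    (encard_crossPolytopeVertices_le n c).trans (by exact_mod_cast two_mul_le_two_pow n)
  exact ⟨coveringFunctional_le_of_subset_add_smul hγ hcard hcover,
    rpow_lt_one (by positivity) ((div_lt_one (by positivity)).2 (lt_add_one _)) (by positivity)⟩
end

section
/- For every integer n ≥ 3 and every p ≥ 1, Γ_{2^n}(Kₙ^p) ≤ min{ (n/(n + ⌊b(2)·n⌋))^{1/p}, n^{1/p} − 1/2 }. -/
open Real Set Pointwise
open scoped NNReal

/-! ### Auxiliary lemmas -/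

lemma add_rpow_le_rpow_add_real {p a c : ℝ} (ha : 0 ≤ a) (hc : 0 ≤ c) (hp : 1 ≤ p) :
    a ^ p + c ^ p ≤ (a + c) ^ p := by
  have := NNReal.add_rpow_le_rpow_add a.toNNReal c.toNNReal hp
  have h1 : ((a.toNNReal ^ p + c.toNNReal ^ p : ℝ≥0) : ℝ) ≤ (((a.toNNReal + c.toNNReal) ^ p : ℝ≥0) : ℝ) :=
    NNReal.coe_le_coe.2 this
  rw [NNReal.coe_add, NNReal.coe_rpow, NNReal.coe_rpow, NNReal.coe_rpow, NNReal.coe_add,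
    Real.coe_toNNReal a ha, Real.coe_toNNReal c hc] at h1
  exact h1

lemma abs_rpow_diff_le {p a c : ℝ} (ha : 0 ≤ a) (hc : 0 ≤ c) (hp : 1 ≤ p) :
    |a - c| ^ p ≤ |a ^ p - c ^ p| := by
  have hp0 : 0 ≤ p := le_trans zero_le_one hp
  rcases le_total c a with h | h
  · have key : (a - c) ^ p + c ^ p ≤ a ^ p := by
      have := add_rpow_le_rpow_add_real (sub_nonneg.2 h) hc hp
      simpa [sub_add_cancel] using this
    have h2 : a - c ≤ |a - c| := le_abs_self _
    rw [abs_of_nonneg (sub_nonneg.2 h)]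
    rw [abs_of_nonneg (sub_nonneg.2 (Real.rpow_le_rpow hc h hp0))]
    linarith
  · have key : (c - a) ^ p + a ^ p ≤ c ^ p := by
      have := add_rpow_le_rpow_add_real (sub_nonneg.2 h) ha hp
      simpa [sub_add_cancel] using this
    rw [abs_sub_comm, abs_of_nonneg (sub_nonneg.2 h), abs_sub_comm,
      abs_of_nonneg (sub_nonneg.2 (Real.rpow_le_rpow ha h hp0))]
    linarith

/-- choose `m ≤ M` pointwise with prescribed sum. -/
lemma exists_le_sum_eq {n : ℕ} (M : Fin n → ℕ) (j : ℕ) (hj : j ≤ ∑ i, M i) :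
    ∃ m : Fin n → ℕ, (∀ i, m i ≤ M i) ∧ ∑ i, m i = j := by
  induction j with
  | zero => exact ⟨fun _ => 0, fun i => Nat.zero_le _, by simp⟩
  | succ j ih =>
    obtain ⟨m, hm, hms⟩ := ih (le_trans (Nat.le_succ j) hj)
    have : ∃ i, m i < M i := by
      by_contra h
      push_neg at h
      have : ∑ i, M i ≤ ∑ i, m i := Finset.sum_le_sum fun i _ => h i
      omega
    obtain ⟨i, hi⟩ := this
    refine ⟨Function.update m i (m i + 1), fun i' => ?_, ?_⟩
    · rcases eq_or_ne i' i with rfl | hne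
      · simp [Function.update_self]; omega
      · simp [Function.update_of_ne hne, hm i']
    · rw [Finset.sum_update_of_mem (Finset.mem_univ i)]
      rw [← hms, ← Finset.sum_erase_add _ m (Finset.mem_univ i), Finset.sdiff_singleton_eq_erase]
      ring

/-- Rounding lemma. -/
lemma rounding {n k : ℕ} (w : Fin n → ℝ) (hw : ∀ i, 0 ≤ w i)
    (hsum : ∑ i, w i ≤ (n : ℝ) + k) :
    ∃ m : Fin n → ℕ, (∑ i, m i) ≤ k ∧ ∑ i, |w i - (m i : ℝ)| ≤ (n : ℝ) := by
  by_cases hM : ∑ i, ⌊w i⌋₊ ≤ k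
  · refine ⟨fun i => ⌊w i⌋₊, hM, ?_⟩
    have : ∀ i, |w i - (⌊w i⌋₊ : ℝ)| ≤ 1 := by
      intro i
      rw [abs_of_nonneg (sub_nonneg.2 (Nat.floor_le (hw i)))]
      have := Nat.lt_floor_add_one (w i)
      linarith
    calc ∑ i, |w i - (⌊w i⌋₊ : ℝ)| ≤ ∑ _i : Fin n, (1 : ℝ) :=
          Finset.sum_le_sum fun i _ => this i
      _ = n := by simp
  · push_neg at hM
    obtain ⟨m, hm, hms⟩ := exists_le_sum_eq (fun i => ⌊w i⌋₊) k hM.le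
    refine ⟨m, hms.le, ?_⟩
    have hmw : ∀ i, (m i : ℝ) ≤ w i := fun i =>
      le_trans (Nat.cast_le.2 (hm i)) (Nat.floor_le (hw i))
    have : ∑ i, |w i - (m i : ℝ)| = ∑ i, w i - (k : ℝ) := by
      rw [← hms]
      push_cast
      rw [← Finset.sum_sub_distrib]
      exact Finset.sum_congr rfl fun i _ => abs_of_nonneg (sub_nonneg.2 (hmw i))
    rw [this]
    linarith

lemma geo_bound (k : ℕ) :
    ∑ j ∈ Finset.Icc (-(k:ℤ)) k, (1/10 : ℝ) ^ (j.natAbs) ≤ 11/9 - (2/9) * (1/10)^k := by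
  induction k with
  | zero => norm_num
  | succ k ih =>
    have hsplit : Finset.Icc (-(k+1:ℕ):ℤ) (k+1:ℕ) =
        insert (-(k+1:ℕ):ℤ) (insert ((k+1:ℕ):ℤ) (Finset.Icc (-(k:ℤ)) k)) := by
      ext x
      simp only [Finset.mem_Icc, Finset.mem_insert]
      push_cast
      omega
    have h1 : (-(k+1:ℕ):ℤ) ∉ insert ((k+1:ℕ):ℤ) (Finset.Icc (-(k:ℤ)) k) := by
      simp only [Finset.mem_insert, Finset.mem_Icc]
      push_cast
      omega
    have h2 : ((k+1:ℕ):ℤ) ∉ Finset.Icc (-(k:ℤ)) k := by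
      simp only [Finset.mem_Icc]
      push_cast
      omega
    rw [hsplit, Finset.sum_insert h1, Finset.sum_insert h2]
    have e1 : ((-(k+1:ℕ):ℤ)).natAbs = k+1 := by push_cast; omega
    have e2 : (((k+1:ℕ):ℤ)).natAbs = k+1 := by push_cast; omega
    rw [e1, e2]
    have : (1/10:ℝ)^(k+1) = (1/10) * (1/10)^k := by ring
    rw [this]
    linarith [ih]

set_option exponentiation.threshold 2000 in
lemma nat_ineq (n k : ℕ) (hkn : 500 * k ≤ 103 * n) : 10 ^ k * 11 ^ n ≤ 18 ^ n := by
  have h500 : (10 ^ k * 11 ^ n) ^ 500 ≤ (18 ^ n) ^ 500 := by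
    have l1 : (10 ^ k * 11 ^ n) ^ 500 = 10 ^ (k * 500) * 11 ^ (n * 500) := by
      rw [mul_pow, ← pow_mul, ← pow_mul]
    have l2 : (10:ℕ) ^ (k * 500) ≤ 10 ^ (103 * n) := Nat.pow_le_pow_right (by norm_num) (by omega)
    have l3 : (10:ℕ) ^ (103 * n) * 11 ^ (n * 500) = (10 ^ 103 * 11 ^ 500) ^ n := by
      rw [mul_pow, ← pow_mul, ← pow_mul, Nat.mul_comm 103 n, Nat.mul_comm 500 n]
    have l4 : ((10:ℕ) ^ 103 * 11 ^ 500) ^ n ≤ (18 ^ 500) ^ n := by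
      apply Nat.pow_le_pow_left
      norm_num
    calc (10 ^ k * 11 ^ n) ^ 500 = 10 ^ (k * 500) * 11 ^ (n * 500) := l1
      _ ≤ 10 ^ (103 * n) * 11 ^ (n * 500) := Nat.mul_le_mul_right _ l2
      _ = (10 ^ 103 * 11 ^ 500) ^ n := l3
      _ ≤ (18 ^ 500) ^ n := l4
      _ = (18 ^ n) ^ 500 := by rw [← pow_mul, ← pow_mul, Nat.mul_comm 500 n]
  exact (Nat.pow_le_pow_iff_left (by norm_num : (500:ℕ) ≠ 0)).mp h500

lemma card_Iz_le (n k : ℕ) (hkn : 500 * k ≤ 103 * n) :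
    ((Fintype.piFinset fun _ : Fin n => Finset.Icc (-(k:ℤ)) k).filter
      (fun z => ∑ i, (z i).natAbs ≤ k)).card ≤ 2 ^ n := by
  classical
  set S := ((Fintype.piFinset fun _ : Fin n => Finset.Icc (-(k:ℤ)) k).filter
      (fun z => ∑ i, (z i).natAbs ≤ k)) with hS
  have key : (S.card : ℝ) ≤ 10 ^ k * (11/9 : ℝ) ^ n := by
    have step1 : (S.card : ℝ) ≤ ∑ z ∈ S, 10 ^ k * ∏ i, (1/10 : ℝ) ^ ((z i).natAbs) := by
      rw [Finset.card_eq_sum_ones S]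
      push_cast
      apply Finset.sum_le_sum
      intro z hz
      have hzk : ∑ i, (z i).natAbs ≤ k := (Finset.mem_filter.mp hz).2
      rw [Finset.prod_pow_eq_pow_sum]
      have : (1/10 : ℝ) ^ k ≤ (1/10 : ℝ) ^ (∑ i, (z i).natAbs) :=
        pow_le_pow_of_le_one (by norm_num) (by norm_num) hzk
      calc (1:ℝ) = 10 ^ k * (1/10 : ℝ) ^ k := by
            rw [one_div, inv_pow]
            field_simp
        _ ≤ 10 ^ k * (1/10 : ℝ) ^ (∑ i, (z i).natAbs) := by
            apply mul_le_mul_of_nonneg_left this (by positivity)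
    have step2 : ∑ z ∈ S, 10 ^ k * ∏ i, (1/10 : ℝ) ^ ((z i).natAbs)
        ≤ 10 ^ k * ∑ z ∈ (Fintype.piFinset fun _ : Fin n => Finset.Icc (-(k:ℤ)) k),
            ∏ i, (1/10 : ℝ) ^ ((z i).natAbs) := by
      rw [← Finset.mul_sum]
      apply mul_le_mul_of_nonneg_left _ (by positivity)
      apply Finset.sum_le_sum_of_subset_of_nonneg (Finset.filter_subset _ _)
      intro z _ _
      positivity
    have step3 : ∑ z ∈ (Fintype.piFinset fun _ : Fin n => Finset.Icc (-(k:ℤ)) k),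
        ∏ i, (1/10 : ℝ) ^ ((z i).natAbs) = (∑ j ∈ Finset.Icc (-(k:ℤ)) k, (1/10 : ℝ) ^ (j.natAbs)) ^ n := by
      have hps := Finset.prod_univ_sum (fun _ : Fin n => Finset.Icc (-(k:ℤ)) k)
        (fun _ j => (1/10:ℝ) ^ (j.natAbs))
      rw [← hps, Finset.prod_const, Finset.card_univ, Fintype.card_fin]
    have step4 : (∑ j ∈ Finset.Icc (-(k:ℤ)) k, (1/10 : ℝ) ^ (j.natAbs)) ^ n ≤ (11/9 : ℝ) ^ n := by
      apply pow_le_pow_left₀ _ _ n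
      · positivity
      · have := geo_bound k
        have : ∑ j ∈ Finset.Icc (-(k:ℤ)) k, (1/10 : ℝ) ^ (j.natAbs) ≤ 11/9 := by
          have h9 : (0:ℝ) ≤ (2/9) * (1/10)^k := by positivity
          linarith [geo_bound k]
        exact this
    calc (S.card : ℝ) ≤ ∑ z ∈ S, 10 ^ k * ∏ i, (1/10 : ℝ) ^ ((z i).natAbs) := step1
      _ ≤ 10 ^ k * ∑ z ∈ (Fintype.piFinset fun _ : Fin n => Finset.Icc (-(k:ℤ)) k),
            ∏ i, (1/10 : ℝ) ^ ((z i).natAbs) := step2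
      _ = 10 ^ k * (∑ j ∈ Finset.Icc (-(k:ℤ)) k, (1/10 : ℝ) ^ (j.natAbs)) ^ n := by rw [step3]
      _ ≤ 10 ^ k * (11/9 : ℝ) ^ n := by
            apply mul_le_mul_of_nonneg_left step4 (by positivity)
  have final : (10:ℝ) ^ k * (11/9 : ℝ) ^ n ≤ 2 ^ n := by
    rw [div_pow, ← mul_div_assoc, div_le_iff₀ (by positivity)]
    have := nat_ineq n k hkn
    have hcast : (10:ℝ) ^ k * 11 ^ n ≤ 18 ^ n := by exact_mod_cast this
    calc (10:ℝ) ^ k * 11 ^ n ≤ 18 ^ n := hcast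
      _ = 2 ^ n * 9 ^ n := by rw [← mul_pow]; norm_num
  have : (S.card : ℝ) ≤ (2:ℝ) ^ n := le_trans key final
  exact_mod_cast this

lemma g_eq {x : ℝ} (hx : 0 < x) : g x = (2 ^ x * (1 + x)) * ((1 + x) / x) ^ x := by
  have h1 : (0:ℝ) < 1 + x := by linarith
  unfold g
  rw [Real.div_rpow h1.le hx.le, Real.rpow_add h1 1 x, Real.rpow_one]
  field_simp [(Real.rpow_pos_of_pos hx x).ne']

lemma g_mono {x y : ℝ} (hx : 0 < x) (hxy : x ≤ y) : g x ≤ g y := by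
  have hy : 0 < y := lt_of_lt_of_le hx hxy
  have h1x : (0:ℝ) < 1 + x := by linarith
  have h1y : (0:ℝ) < 1 + y := by linarith
  rw [g_eq hx, g_eq hy]
  have f1 : (2:ℝ) ^ x ≤ 2 ^ y := Real.rpow_le_rpow_of_exponent_le one_le_two hxy
  have f2 : (1:ℝ) + x ≤ 1 + y := by linarith
  have f3 : ((1 + x) / x) ^ x ≤ ((1 + y) / y) ^ y := by
    have hm1 : (-1:ℝ) ≤ 1/y := by
      have : (0:ℝ) ≤ 1/y := by positivity
      linarith
    have hb := one_add_mul_self_le_rpow_one_add hm1 ((one_le_div hx).2 hxy)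
    have t1 : (1:ℝ) + (y/x) * (1/y) = (1+x)/x := by
      field_simp
      try ring
    have t2 : (1:ℝ) + 1/y = (1+y)/y := by
      field_simp
      try ring
    rw [t1, t2] at hb
    have step : ((1+x)/x) ^ x ≤ (((1+y)/y) ^ (y/x)) ^ x :=
      Real.rpow_le_rpow (by positivity) hb hx.le
    calc ((1 + x) / x) ^ x ≤ (((1+y)/y) ^ (y/x)) ^ x := step
      _ = ((1+y)/y) ^ y := by
          rw [← Real.rpow_mul (by positivity), div_mul_cancel₀ _ hx.ne']
  have p3 : (0:ℝ) ≤ ((1 + x) / x) ^ x := (Real.rpow_pos_of_pos (by positivity) x).le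
  have : (2:ℝ) ^ x * (1 + x) ≤ 2 ^ y * (1 + y) :=
    mul_le_mul f1 f2 h1x.le (Real.rpow_pos_of_pos two_pos y).le
  exact mul_le_mul this f3 p3 (by positivity)

set_option exponentiation.threshold 2000 in
lemma two_lt_g_c : (2:ℝ) < g (103/500) := by
  set c : ℝ := 103/500 with hc
  have hcpos : (0:ℝ) < c := by norm_num
  have h1c : (1:ℝ) + c = 603/500 := by norm_num
  have hgpos : 0 < g c := by
    unfold g
    have := Real.rpow_pos_of_pos (show (0:ℝ) < 2 by norm_num) c
    have := Real.rpow_pos_of_pos (show (0:ℝ) < 1 + c by norm_num) (1+c)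
    have := Real.rpow_pos_of_pos hcpos c
    positivity
  by_contra hle
  push_neg at hle
  have hpow : (g c) ^ (500:ℕ) ≤ 2 ^ (500:ℕ) := pow_le_pow_left₀ hgpos.le hle 500
  have hval : (g c) ^ (500:ℕ) = 2 ^ (103:ℕ) * (603/500:ℝ) ^ (603:ℕ) / (103/500:ℝ) ^ (103:ℕ) := by
    unfold g
    rw [div_pow, mul_pow]
    rw [← Real.rpow_natCast ((2:ℝ)^c) 500, ← Real.rpow_natCast (((1:ℝ)+c)^(1+c)) 500,
      ← Real.rpow_natCast ((c:ℝ)^c) 500]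
    rw [← Real.rpow_mul (by norm_num : (0:ℝ) ≤ 2),
      ← Real.rpow_mul (by norm_num : (0:ℝ) ≤ 1 + c),
      ← Real.rpow_mul hcpos.le]
    have e1 : c * (500:ℕ) = ((103:ℕ):ℝ) := by push_cast; norm_num [hc]
    have e2 : (1 + c) * (500:ℕ) = ((603:ℕ):ℝ) := by push_cast; norm_num [hc]
    rw [e1, e2, Real.rpow_natCast, Real.rpow_natCast, Real.rpow_natCast, h1c, hc]
  rw [hval] at hpow
  rw [div_le_iff₀ (by positivity)] at hpow
  norm_num at hpow

/-- scaled-ball membership criterion -/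
lemma mem_smul_Kp {n : ℕ} {p γ : ℝ} (hp : 1 ≤ p) (hγ : 0 < γ) (d : Fin n → ℝ)
    (h : ∑ i, |d i| ^ p ≤ γ ^ p) : d ∈ γ • Kp n p := by
  have hp0 : (0:ℝ) < p := lt_of_lt_of_le zero_lt_one hp
  rw [Set.mem_smul_set]
  refine ⟨γ⁻¹ • d, ?_, ?_⟩
  · show ∑ i, |(γ⁻¹ • d) i| ^ p ≤ 1
    have he : ∀ i, |(γ⁻¹ • d) i| ^ p = (γ⁻¹) ^ p * |d i| ^ p := by
      intro i
      have : |(γ⁻¹ • d) i| = γ⁻¹ * |d i| := by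
        simp [Pi.smul_apply, abs_mul, abs_of_nonneg (inv_nonneg.2 hγ.le), smul_eq_mul]
      rw [this, Real.mul_rpow (inv_nonneg.2 hγ.le) (abs_nonneg _)]
    rw [Finset.sum_congr rfl (fun i _ => he i), ← Finset.mul_sum]
    have hγp : (0:ℝ) < γ ^ p := Real.rpow_pos_of_pos hγ p
    rw [Real.inv_rpow hγ.le]
    calc (γ ^ p)⁻¹ * ∑ i, |d i| ^ p ≤ (γ ^ p)⁻¹ * γ ^ p :=
          mul_le_mul_of_nonneg_left h (inv_nonneg.2 hγp.le)
      _ = 1 := inv_mul_cancel₀ hγp.ne'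
  · ext i
    simp [Pi.smul_apply, smul_eq_mul]
    field_simp

lemma rpow_one_div_rpow {p : ℝ} (hp : p ≠ 0) {A : ℝ} (hA : 0 ≤ A) : (A ^ (1/p)) ^ p = A := by
  rw [← Real.rpow_mul hA, one_div_mul_cancel hp, Real.rpow_one]

/-- upper bound for the covering functional from an explicit finite cover -/
lemma coveringFunctional_le_s13 {n : ℕ} (hn : 0 < n) {p : ℝ} (γ : ℝ) (hγ : 0 < γ)
    (C₀ : Finset (Fin n → ℝ)) (hcard : C₀.card ≤ 2 ^ n)
    (hcov : Kp n p ⊆ ↑C₀ + γ • Kp n p) :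
    coveringFunctional (2 ^ n) (Kp n p) ≤ γ := by
  haveI : Nonempty (Fin n) := ⟨⟨0, hn⟩⟩
  have hinf : (Set.univ : Set (Fin n → ℝ)).Infinite := Set.infinite_univ
  obtain ⟨C, hsub, -, hncard⟩ := hinf.exists_superset_ncard_eq (k := 2^n) (Set.subset_univ (↑C₀))
    C₀.finite_toSet (by rw [Set.ncard_coe_finset]; exact hcard)
  apply csInf_le
  · exact ⟨0, fun γ' hγ' => hγ'.1.le⟩
  · refine ⟨hγ, C, ?_, hncard, ?_⟩
    · apply Set.finite_of_ncard_ne_zero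
      rw [hncard]
      exact (Nat.two_pow_pos n).ne'
    · exact hcov.trans (Set.add_subset_add hsub Set.Subset.rfl)

lemma abs_le_one_of_mem {n : ℕ} {p : ℝ} (hp : 1 ≤ p) {x : Fin n → ℝ} (hx : x ∈ Kp n p)
    (i : Fin n) : |x i| ≤ 1 := by
  have hsum : ∑ j, |x j| ^ p ≤ 1 := hx
  have hterm : |x i| ^ p ≤ 1 := by
    refine le_trans ?_ hsum
    apply Finset.single_le_sum (f := fun j => |x j| ^ p) (fun j _ => ?_) (Finset.mem_univ i)
    exact Real.rpow_nonneg (abs_nonneg _) p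
  by_contra hgt
  push_neg at hgt
  have h1 : |x i| ^ (1:ℝ) ≤ |x i| ^ p :=
    Real.rpow_le_rpow_of_exponent_le hgt.le hp
  rw [Real.rpow_one] at h1
  linarith

/-! ### Main theorem -/

/-- For every integer `n ≥ 3` and every `p ≥ 1`, with `b = b(2)` the positive solution
of `g b = 2`:
`Γ_{2^n}(Kₙ^p) ≤ min{ (n/(n+⌊b·n⌋))^(1/p), n^(1/p) − 1/2 }`. -/
theorem coveringFunctional_Kp_min_bound (n : ℕ) (hn : 3 ≤ n) (p : ℝ) (hp : 1 ≤ p)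
    (b : ℝ) (hb : 0 < b) (hgb : g b = 2) :
    coveringFunctional (2 ^ n) (Kp n p) ≤
      min (((n : ℝ) / ((n : ℝ) + (⌊b * (n : ℝ)⌋₊ : ℝ))) ^ (1 / p))
        ((n : ℝ) ^ (1 / p) - 1 / 2) := by
  classical
  have hn0 : 0 < n := by omega
  have hp0 : (0:ℝ) < p := lt_of_lt_of_le zero_lt_one hp
  have hp0' : p ≠ 0 := hp0.ne'
  have hnR : (0:ℝ) < n := by exact_mod_cast hn0
  -- b is at most 103/500
  have hb206 : b ≤ 103/500 := by
    by_contra hgt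
    push_neg at hgt
    have := g_mono (show (0:ℝ) < 103/500 by norm_num) hgt.le
    rw [hgb] at this
    exact absurd this (not_le.2 two_lt_g_c)
  set k : ℕ := ⌊b * (n : ℝ)⌋₊ with hk
  have hkn : 500 * k ≤ 103 * n := by
    have h1 : (k : ℝ) ≤ b * n := Nat.floor_le (by positivity)
    have h2 : b * n ≤ (103/500) * n :=
      mul_le_mul_of_nonneg_right hb206 hnR.le
    have : (500:ℝ) * k ≤ 103 * n := by nlinarith
    exact_mod_cast this
  have hnk : (0:ℝ) < (n:ℝ) + (k:ℝ) := by positivity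
  apply le_min
  -- ################# First bound #################
  · set γ : ℝ := ((n : ℝ) / ((n : ℝ) + (k : ℝ))) ^ (1 / p) with hγdef
    have hbase : (0:ℝ) < (n : ℝ) / ((n : ℝ) + (k : ℝ)) := by positivity
    have hγ : 0 < γ := Real.rpow_pos_of_pos hbase _
    have hγp : γ ^ p = (n : ℝ) / ((n : ℝ) + (k : ℝ)) := rpow_one_div_rpow hp0' hbase.le
    -- the centers
    set Iz : Finset (Fin n → ℤ) := ((Fintype.piFinset fun _ : Fin n => Finset.Icc (-(k:ℤ)) k).filter
      (fun z => ∑ i, (z i).natAbs ≤ k)) with hIz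
    set φ : (Fin n → ℤ) → (Fin n → ℝ) := fun z i =>
      (if z i < 0 then (-1:ℝ) else 1) * (((z i).natAbs : ℝ) / ((n:ℝ) + k)) ^ (1/p) with hφ
    apply coveringFunctional_le_s13 hn0 γ hγ (Iz.image φ)
      (le_trans Finset.card_image_le (card_Iz_le n k hkn))
    -- the covering property
    intro x hx
    have hv : ∑ i, |x i| ^ p ≤ 1 := hx
    have hvi : ∀ i, (0:ℝ) ≤ |x i| ^ p := fun i => Real.rpow_nonneg (abs_nonneg _) p
    -- apply rounding to w i = (n+k) * |x i|^p
    obtain ⟨m, hmk, hmsum⟩ := rounding (fun i => ((n:ℝ) + k) * |x i| ^ p)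
      (fun i => by positivity)
      (by
        rw [← Finset.mul_sum]
        calc ((n:ℝ) + k) * ∑ i, |x i| ^ p ≤ ((n:ℝ) + k) * 1 :=
              mul_le_mul_of_nonneg_left hv hnk.le
          _ = (n:ℝ) + k := by ring)
    set z : Fin n → ℤ := fun i => if x i < 0 then -(m i : ℤ) else (m i : ℤ) with hz
    have hzabs : ∀ i, (z i).natAbs = m i := by
      intro i
      by_cases h : x i < 0 <;> simp [hz, h]
    have hzmem : z ∈ Iz := by
      rw [hIz, Finset.mem_filter]
      constructor
      · rw [Fintype.mem_piFinset]
        intro i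
        have h1 : m i ≤ k := le_trans (Finset.single_le_sum
          (f := fun j => m j) (fun j _ => Nat.zero_le _) (Finset.mem_univ i)) hmk
        have h2 := hzabs i
        rw [Finset.mem_Icc]
        omega
      · rw [Finset.sum_congr rfl (fun i _ => hzabs i)]
        exact hmk
    set t : Fin n → ℝ := fun i => ((m i : ℝ) / ((n:ℝ) + k)) ^ (1/p) with ht
    have htn : ∀ i, 0 ≤ t i := fun i => Real.rpow_nonneg (by positivity) _
    have hkey : ∀ i, |x i - φ z i| = |(|x i|) - t i| := by
      intro i
      have hφz : φ z i = (if z i < 0 then (-1:ℝ) else 1) * t i := by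
        rw [hφ]
        simp only
        rw [hzabs i]
      by_cases h : x i < 0
      · by_cases hm : m i = 0
        · have : z i = 0 := by simp [hz, h, hm]
          rw [hφz, this]
          have ht0 : t i = 0 := by
            rw [ht]; simp only [hm, Nat.cast_zero, zero_div]
            exact Real.zero_rpow (by positivity : (1/p) ≠ 0)
          rw [ht0]
          simp [abs_of_nonpos h.le, abs_of_neg h]
        · have hzi : z i < 0 := by
            simp only [hz, if_pos h]
            omega
          rw [hφz, if_pos hzi]
          rw [abs_of_neg h]
          have : x i - -1 * t i = -(- x i - t i) := by ring
          rw [this, abs_neg]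
      · push_neg at h
        have hzi : ¬ (z i < 0) := by
          simp only [hz, if_neg (not_lt.2 h)]
          omega
        rw [hφz, if_neg hzi, one_mul, abs_of_nonneg h]
    have hsumbound : ∑ i, |x i - φ z i| ^ p ≤ γ ^ p := by
      have hstep : ∀ i, |x i - φ z i| ^ p ≤ |((n:ℝ) + k) * |x i| ^ p - (m i : ℝ)| / ((n:ℝ) + k) := by
        intro i
        rw [hkey i]
        have h1 : |(|x i|) - t i| ^ p ≤ |(|x i|) ^ p - (t i) ^ p| :=
          abs_rpow_diff_le (abs_nonneg _) (htn i) hp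
        have h2 : (t i) ^ p = (m i : ℝ) / ((n:ℝ) + k) := rpow_one_div_rpow hp0' (by positivity)
        rw [h2] at h1
        refine le_trans h1 (le_of_eq ?_)
        rw [eq_div_iff hnk.ne', ← abs_of_pos hnk, ← abs_mul, abs_of_pos hnk]
        congr 1
        field_simp
      calc ∑ i, |x i - φ z i| ^ p
          ≤ ∑ i, |((n:ℝ) + k) * |x i| ^ p - (m i : ℝ)| / ((n:ℝ) + k) :=
            Finset.sum_le_sum fun i _ => hstep i
        _ = (∑ i, |((n:ℝ) + k) * |x i| ^ p - (m i : ℝ)|) / ((n:ℝ) + k) := by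
            rw [Finset.sum_div]
        _ ≤ (n:ℝ) / ((n:ℝ) + k) := by
            apply div_le_div_of_nonneg_right hmsum hnk.le
        _ = γ ^ p := hγp.symm
    have hcmem : φ z ∈ Iz.image φ := Finset.mem_image_of_mem φ hzmem
    have hdmem : x - φ z ∈ γ • Kp n p := by
      apply mem_smul_Kp hp hγ
      have : ∀ i, |(x - φ z) i| = |x i - φ z i| := fun i => rfl
      rw [Finset.sum_congr rfl (fun i _ => by rw [this i])]
      exact hsumbound
    have : x = φ z + (x - φ z) := by ring
    rw [this]
    exact Set.add_mem_add (Finset.mem_coe.2 hcmem) hdmem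
  -- ################# Second bound #################
  · set γ : ℝ := (n : ℝ) ^ (1/p) / 2 with hγdef
    have hnp : (0:ℝ) < (n:ℝ) ^ (1/p) := Real.rpow_pos_of_pos hnR _
    have hγ : 0 < γ := by positivity
    have hone : (1:ℝ) ≤ (n:ℝ) ^ (1/p) := by
      have := Real.rpow_le_rpow (by norm_num : (0:ℝ) ≤ 1) (by exact_mod_cast hn0 : (1:ℝ) ≤ n) (by positivity : (0:ℝ) ≤ 1/p)
      rwa [Real.one_rpow] at this
    have hfinal : γ ≤ (n : ℝ) ^ (1/p) - 1/2 := by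
      rw [hγdef]
      linarith
    refine le_trans ?_ hfinal
    -- the centers: all sign vectors with entries ±1/2
    set C₂ : Finset (Fin n → ℝ) := (Finset.univ : Finset (Fin n → Bool)).image
      (fun ε i => if ε i then (1/2:ℝ) else -(1/2)) with hC₂
    apply coveringFunctional_le_s13 hn0 γ hγ C₂
    · refine le_trans Finset.card_image_le ?_
      rw [Finset.card_univ]
      simp
    · intro x hx
      set c : Fin n → ℝ := fun i => if 0 ≤ x i then (1/2:ℝ) else -(1/2) with hc
      have hcmem' : c ∈ C₂ := by
        rw [hC₂]
        refine Finset.mem_image.2 ⟨fun i => decide (0 ≤ x i), Finset.mem_univ _, ?_⟩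
        funext i
        by_cases h : 0 ≤ x i <;> simp [hc, h]
      have habs : ∀ i, |x i - c i| ≤ 1/2 := by
        intro i
        have h1 : |x i| ≤ 1 := abs_le_one_of_mem hp hx i
        rw [abs_le] at h1
        by_cases h : 0 ≤ x i
        · have hci : c i = 1/2 := by simp [hc, h]
          rw [hci, abs_le]
          constructor <;> linarith
        · have hci : c i = -(1/2) := by simp [hc, h]
          push_neg at h
          rw [hci, abs_le]
          constructor <;> linarith
      have hγp : γ ^ p = (n:ℝ) / 2 ^ p := by
        rw [hγdef, Real.div_rpow hnp.le (by norm_num), rpow_one_div_rpow hp0' hnR.le]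
      have hdmem : x - c ∈ γ • Kp n p := by
        apply mem_smul_Kp hp hγ
        have hterm : ∀ i, |(x - c) i| ^ p ≤ (1/2:ℝ) ^ p := by
          intro i
          exact Real.rpow_le_rpow (abs_nonneg _) (habs i) hp0.le
        calc ∑ i, |(x - c) i| ^ p ≤ ∑ _i : Fin n, (1/2:ℝ) ^ p :=
              Finset.sum_le_sum fun i _ => hterm i
          _ = (n:ℝ) * (1/2:ℝ) ^ p := by
              rw [Finset.sum_const, Finset.card_univ, Fintype.card_fin, nsmul_eq_mul]
          _ = γ ^ p := by
              rw [hγp, Real.div_rpow (by norm_num) (by norm_num), Real.one_rpow]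
              ring
      have : x = c + (x - c) := by ring
      rw [this]
      exact Set.add_mem_add (Finset.mem_coe.2 hcmem') hdmem
end

section
/- For each integer n ≥ 3 there is a unique real p(n) ≥ 1 satisfying (n/(n + ⌊b(2)·n⌋))^{1/p(n)} = n^{1/p(n)} − 1/2, and it satisfies ln n / ln(3/2) ≤ p(n) ≤ ln n / ln(1/2 + 1/(1 + b(2))). -/
open Real

lemma b_lt_one (b : ℝ) (hb : 0 < b) (hgb : g b = 2) : b < 1 := by
  by_contra h
  push_neg at h
  have hbb : (0:ℝ) < b ^ b := Real.rpow_pos_of_pos hb b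
  have h1 : (2:ℝ) ≤ 2 ^ b := by
    calc (2:ℝ) = 2 ^ (1:ℝ) := (Real.rpow_one 2).symm
    _ ≤ 2 ^ b := Real.rpow_le_rpow_of_exponent_le one_le_two h
  have h2 : b ^ b ≤ (1 + b) ^ b := Real.rpow_le_rpow hb.le (by linarith) (by linarith)
  have h3 : (1 + b) ^ (1 + b) = (1 + b) ^ b * (1 + b) := by
    rw [add_comm 1 b, Real.rpow_add (by linarith), Real.rpow_one]
  have h4 : 4 * b ^ b ≤ 2 ^ b * (1 + b) ^ (1 + b) := by
    rw [h3]
    have h5 : 2 * b ^ b ≤ 2 ^ b * (1 + b) ^ b :=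
      mul_le_mul h1 h2 hbb.le (by positivity)
    have h6 : 2 * b ^ b * (1 + b) ≤ 2 ^ b * (1 + b) ^ b * (1 + b) :=
      mul_le_mul_of_nonneg_right h5 (by linarith)
    nlinarith [h6, hbb]
  have : (4:ℝ) ≤ g b := by
    rw [g, le_div_iff₀ hbb]
    linarith
  linarith [hgb ▸ this]

/-- For each integer `n ≥ 3` (with `b = b(2)` the positive solution of `g b = 2`), there
is a unique real `p ≥ 1` with `(n/(n+⌊b·n⌋))^(1/p) = n^(1/p) − 1/2`, and it satisfies
`ln n / ln (3/2) ≤ p ≤ ln n / ln (1/2 + 1/(1+b))`. -/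
theorem exists_unique_p (n : ℕ) (hn : 3 ≤ n) (b : ℝ) (hb : 0 < b) (hgb : g b = 2) :
    (∃! p : ℝ, 1 ≤ p ∧
        ((n : ℝ) / ((n : ℝ) + (⌊b * (n : ℝ)⌋₊ : ℝ))) ^ (1 / p) = (n : ℝ) ^ (1 / p) - 1 / 2) ∧
      ∀ p : ℝ, 1 ≤ p →
        ((n : ℝ) / ((n : ℝ) + (⌊b * (n : ℝ)⌋₊ : ℝ))) ^ (1 / p) = (n : ℝ) ^ (1 / p) - 1 / 2 →
        Real.log n / Real.log (3 / 2) ≤ p ∧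
          p ≤ Real.log n / Real.log (1 / 2 + 1 / (1 + b)) := by
  have hb1 : b < 1 := b_lt_one b hb hgb
  set N : ℝ := (n : ℝ) with hN
  have hN3 : (3:ℝ) ≤ N := by rw [hN]; exact_mod_cast hn
  have hN0 : (0:ℝ) < N := by linarith
  have hN1 : (1:ℝ) < N := by linarith
  set m : ℝ := (⌊b * N⌋₊ : ℝ) with hm
  have hm0 : (0:ℝ) ≤ m := Nat.cast_nonneg _
  have hmb : m ≤ b * N := Nat.floor_le (by positivity)
  set r : ℝ := N / (N + m) with hr
  have hNm0 : (0:ℝ) < N + m := by linarith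
  have hr0 : (0:ℝ) < r := div_pos hN0 hNm0
  have hr1 : r ≤ 1 := by
    rw [hr, div_le_one hNm0]; linarith
  have hrb : 1 / (1 + b) ≤ r := by
    rw [hr, div_le_div_iff₀ (by linarith) hNm0]
    nlinarith
  -- the function in t
  set F : ℝ → ℝ := fun t => N ^ t - r ^ t with hF
  have hFdef : ∀ t : ℝ, F t = Real.exp (Real.log N * t) - Real.exp (Real.log r * t) := by
    intro t
    rw [hF]
    simp only
    rw [Real.rpow_def_of_pos hN0, Real.rpow_def_of_pos hr0]
  have hFcont : Continuous F := by
    have : F = fun t => Real.exp (Real.log N * t) - Real.exp (Real.log r * t) := funext hFdef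
    rw [this]; continuity
  have hF0 : F 0 = 0 := by simp [hF]
  have hF1 : F 1 = N - r := by simp [hF]
  have hFmono : ∀ t1 t2 : ℝ, t1 < t2 → F t1 < F t2 := by
    intro t1 t2 h12
    have h1 : N ^ t1 < N ^ t2 := Real.rpow_lt_rpow_left_iff hN1 |>.mpr h12
    have h2 : r ^ t2 ≤ r ^ t1 := Real.rpow_le_rpow_of_exponent_ge hr0 hr1 h12.le
    simp only [hF]
    linarith
  -- existence of t in [0,1] with F t = 1/2
  have hivt : (1:ℝ)/2 ∈ Set.Icc (F 0) (F 1) := by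
    rw [hF0, hF1]
    constructor <;> [norm_num; linarith]
  obtain ⟨t, ht01, htF⟩ := intermediate_value_Icc (by norm_num : (0:ℝ) ≤ 1)
    hFcont.continuousOn hivt
  have ht0 : 0 < t := by
    rcases lt_or_eq_of_le ht01.1 with h | h
    · exact h
    · exfalso; rw [← h] at htF; rw [hF0] at htF; norm_num at htF
  have ht1 : t ≤ 1 := ht01.2
  refine ⟨⟨1/t, ⟨?_, ?_⟩, ?_⟩, ?_⟩
  · rw [le_div_iff₀ ht0]; linarith
  · rw [one_div_one_div]
    have : N ^ t - r ^ t = 1/2 := htF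
    linarith [this]
  · -- uniqueness
    rintro q ⟨hq1, hqe⟩
    have hq0 : 0 < q := by linarith
    have hqt : F (1/q) = 1/2 := by
      simp only [hF]
      linarith [hqe]
    have : (1:ℝ)/q = t := by
      by_contra hne
      rcases lt_or_gt_of_ne hne with h | h
      · have := hFmono _ _ h; rw [hqt, htF] at this; linarith
      · have := hFmono _ _ h; rw [hqt, htF] at this; linarith
    rw [← this, one_div_one_div]
  · -- bounds
    intro p hp1 hpe
    have hp0 : 0 < p := by linarith
    set s : ℝ := 1/p with hs
    have hs0 : 0 < s := by positivity
    have hs1 : s ≤ 1 := by rw [hs]; rw [div_le_one hp0]; linarith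
    have heq : N ^ s = 1/2 + r ^ s := by
      have := hpe; linarith [this]
    have hlogN : 0 < Real.log N := Real.log_pos hN1
    constructor
    · -- lower bound
      have hrs1 : r ^ s ≤ 1 := Real.rpow_le_one hr0.le hr1 hs0.le
      have hNs : N ^ s ≤ 3/2 := by linarith
      have hlog : s * Real.log N ≤ Real.log (3/2) := by
        have := Real.log_le_log (Real.rpow_pos_of_pos hN0 s) hNs
        rwa [Real.log_rpow hN0] at this
      have hl32 : 0 < Real.log (3/2 : ℝ) := Real.log_pos (by norm_num)
      rw [div_le_iff₀ hl32]
      have : s * Real.log N * p ≤ Real.log (3/2) * p :=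
        mul_le_mul_of_nonneg_right hlog hp0.le
      have hsp : s * p = 1 := by rw [hs]; field_simp
      calc Real.log N = s * Real.log N * p := by
            rw [mul_comm s (Real.log N), mul_assoc, hsp, mul_one]
      _ ≤ Real.log (3/2) * p := this
      _ = p * Real.log (3/2) := mul_comm _ _
    · -- upper bound
      set c : ℝ := 1/2 + 1/(1+b) with hc
      have hc1 : 1 < c := by
        rw [hc]
        have : (1:ℝ)/2 < 1/(1+b) := by
          rw [div_lt_div_iff₀ two_pos (by linarith)]; linarith
        linarith
      have hrs : (1:ℝ)/(1+b) ≤ r ^ s := by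
        calc (1:ℝ)/(1+b) ≤ r := hrb
        _ = r ^ (1:ℝ) := (Real.rpow_one r).symm
        _ ≤ r ^ s := Real.rpow_le_rpow_of_exponent_ge hr0 hr1 hs1
      have hNs : c ≤ N ^ s := by rw [heq, hc]; linarith
      have hlogc : 0 < Real.log c := Real.log_pos hc1
      have hlog : Real.log c ≤ s * Real.log N := by
        have := Real.log_le_log (by linarith : (0:ℝ) < c) hNs
        rwa [Real.log_rpow hN0] at this
      rw [le_div_iff₀ hlogc]
      have hsp : s * p = 1 := by rw [hs]; field_simp
      calc p * Real.log c ≤ p * (s * Real.log N) :=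
            mul_le_mul_of_nonneg_left hlog hp0.le
      _ = Real.log N := by rw [← mul_assoc, mul_comm p s, hsp, one_mul]
end
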